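/- arXiv:2010.05666 — 6 statements merged into one kernel-verified Lean document; each statement's English description precedes it below -/
import Mathlib

section
/- Let H be a linear n-uniform hypergraph with n edges. If no integer k with 2 ≤ k < √n occurs as the degree of any vertex (H is slightly weakly dense), then χ(H) = n. -/
open scoped Classical

/-- A finite hypergraph is given by its finite set of edges, each a finite set of vertices.
`Linear E` means any two distinct edges share at most one vertex. -/
def HG.Linear {V : Type*} (E : Finset (Finset V)) : Prop :=
  ∀ e₁ ∈ E, ∀ e₂ ∈ E, e₁ ≠ e₂ → (e₁ ∩ e₂).card ≤ 1

/-- The degree of a vertex: the number of edges containing it. -/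
noncomputable def HG.deg {V : Type*} (E : Finset (Finset V)) (v : V) : ℕ :=
  (E.filter (fun e => v ∈ e)).card

/-- The vertex set of the hypergraph: the union of its edges. -/
noncomputable def HG.verts {V : Type*} (E : Finset (Finset V)) : Finset V := E.sup id

/-- The adjacency of a vertex `v`: vertices distinct from `v` sharing an edge with `v`. -/
noncomputable def HG.adj {V : Type*} (E : Finset (Finset V)) (v : V) : Finset V :=
  (HG.verts E).filter (fun u => u ≠ v ∧ ∃ e ∈ E, v ∈ e ∧ u ∈ e)

/-- A proper coloring: vertices lying in a common edge receive distinct colors. -/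
def HG.Proper {V : Type*} {m : ℕ} (E : Finset (Finset V)) (f : V → Fin m) : Prop :=
  ∀ e ∈ E, ∀ u ∈ e, ∀ w ∈ e, u ≠ w → f u ≠ f w

namespace EFL
open Finset

variable {V : Type*}

def Adj (E : Finset (Finset V)) (u w : V) : Prop :=
  u ≠ w ∧ ∃ e ∈ E, u ∈ e ∧ w ∈ e

lemma Adj.symm {E : Finset (Finset V)} {u w : V} (h : Adj E u w) : Adj E w u := by
  obtain ⟨hne, e, he, h1, h2⟩ := h; exact ⟨hne.symm, e, he, h2, h1⟩

noncomputable def mS (E : Finset (Finset V)) : Finset V :=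
  (HG.verts E).filter (fun v => 2 ≤ HG.deg E v)

lemma mem_verts_of_deg {E : Finset (Finset V)} {v : V} (h : 1 ≤ HG.deg E v) :
    v ∈ HG.verts E := by
  rw [HG.deg] at h
  have : (E.filter (fun e => v ∈ e)).Nonempty := Finset.card_pos.mp (by omega)
  obtain ⟨e, he⟩ := this
  rw [Finset.mem_filter] at he
  exact Finset.mem_sup.mpr ⟨e, he.1, he.2⟩

lemma mem_mS {E : Finset (Finset V)} {v : V} : v ∈ mS E ↔ 2 ≤ HG.deg E v := by
  rw [mS, Finset.mem_filter]
  exact ⟨fun h => h.2, fun h => ⟨mem_verts_of_deg (by omega), h⟩⟩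

lemma deg_pos {E : Finset (Finset V)} {e : Finset V} {v : V} (he : e ∈ E) (hv : v ∈ e) :
    1 ≤ HG.deg E v := by
  rw [HG.deg]
  have : (E.filter (fun f => v ∈ f)).Nonempty := ⟨e, Finset.mem_filter.mpr ⟨he, hv⟩⟩
  have := Finset.card_pos.mpr this
  omega

lemma deg_two {E : Finset (Finset V)} {e g : Finset V} {v : V} (he : e ∈ E) (hg : g ∈ E)
    (hne : e ≠ g) (hv : v ∈ e) (hv' : v ∈ g) : 2 ≤ HG.deg E v := by
  rw [HG.deg]
  have : ({e, g} : Finset (Finset V)) ⊆ E.filter (fun f => v ∈ f) := by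
    intro x hx
    rcases Finset.mem_insert.mp hx with rfl | hx
    · exact Finset.mem_filter.mpr ⟨he, hv⟩
    · rw [Finset.mem_singleton] at hx; subst hx; exact Finset.mem_filter.mpr ⟨hg, hv'⟩
  calc 2 = ({e, g} : Finset (Finset V)).card := (Finset.card_pair hne).symm
    _ ≤ _ := Finset.card_le_card this

lemma sum_deg_eq {E : Finset (Finset V)} {e : Finset V} :
    ∑ u ∈ e, HG.deg E u = ∑ g ∈ E, (e ∩ g).card := by
  have h1 : ∀ u, HG.deg E u = ∑ g ∈ E, (if u ∈ g then 1 else 0) := by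
    intro u; rw [HG.deg, Finset.card_filter]
  have h2 : ∀ g ∈ E, (e ∩ g).card = ∑ u ∈ e, (if u ∈ g then 1 else 0) := by
    intro g _
    rw [← Finset.card_filter, Finset.filter_mem_eq_inter]
  rw [Finset.sum_congr rfl h2, Finset.sum_congr rfl (fun u _ => h1 u), Finset.sum_comm]

lemma sum_sub_one {e : Finset V} (f : V → ℕ) (hf : ∀ u ∈ e, 1 ≤ f u) :
    ∑ u ∈ e, (f u - 1) + e.card = ∑ u ∈ e, f u := by
  rw [← Finset.sum_add_distrib.symm.trans (Finset.sum_congr rfl (fun u hu => by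
    have := hf u hu; omega : ∀ u ∈ e, f u - 1 + 1 = f u))]
  simp [Finset.sum_add_distrib]

lemma inter_sum_le {n : ℕ} {E : Finset (Finset V)} (hlin : HG.Linear E) (hE : E.card = n)
    {e : Finset V} (he : e ∈ E) : ∑ g ∈ E.erase e, (e ∩ g).card ≤ n - 1 := by
  calc ∑ g ∈ E.erase e, (e ∩ g).card ≤ ∑ _g ∈ E.erase e, 1 := by
        apply Finset.sum_le_sum
        intro g hg
        exact hlin e he g (Finset.mem_of_mem_erase hg) (Ne.symm (Finset.ne_of_mem_erase hg))
    _ = (E.erase e).card := by simp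
    _ = n - 1 := by rw [Finset.card_erase_of_mem he, hE]

lemma budget {n : ℕ} {E : Finset (Finset V)} (hlin : HG.Linear E) (hE : E.card = n)
    (huniform : ∀ e ∈ E, e.card = n) {e : Finset V} (he : e ∈ E) :
    ∑ u ∈ e, (HG.deg E u - 1) ≤ n - 1 := by
  have h0 : ∑ u ∈ e, HG.deg E u = ∑ g ∈ E, (e ∩ g).card := sum_deg_eq
  have h1 : ∑ g ∈ E.erase e, (e ∩ g).card + (e ∩ e).card = ∑ g ∈ E, (e ∩ g).card :=
    Finset.sum_erase_add E _ he
  have h2 := inter_sum_le hlin hE he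
  have h3 : (e ∩ e).card = n := by rw [Finset.inter_self, huniform e he]
  have h4 := sum_sub_one (HG.deg E) (fun u hu => deg_pos he hu)
  have h5 := huniform e he
  have hn : 1 ≤ n := by rw [← hE]; exact Finset.card_pos.mpr ⟨e, he⟩
  omega

lemma all_ones {α : Type*} {s : Finset α} {f : α → ℕ} (h1 : ∀ x ∈ s, f x ≤ 1)
    (h2 : s.card ≤ ∑ x ∈ s, f x) : ∀ x ∈ s, f x = 1 := by
  intro x hx
  by_contra hne
  have hx0 : f x = 0 := by have := h1 x hx; omega
  have : ∑ y ∈ s, f y = ∑ y ∈ s.erase x, f y + f x := (Finset.sum_erase_add s f hx).symm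
  have hb : ∑ y ∈ s.erase x, f y ≤ (s.erase x).card := by
    calc ∑ y ∈ s.erase x, f y ≤ ∑ _y ∈ s.erase x, 1 :=
          Finset.sum_le_sum (fun y hy => h1 y (Finset.mem_of_mem_erase hy))
      _ = (s.erase x).card := by simp
  have hc : (s.erase x).card = s.card - 1 := Finset.card_erase_of_mem hx
  have : 1 ≤ s.card := Finset.card_pos.mpr ⟨x, hx⟩
  omega

lemma multi_sq {n : ℕ} {E : Finset (Finset V)}
    (hswd : ∀ v ∈ HG.verts E, ¬(2 ≤ HG.deg E v ∧ (HG.deg E v : ℝ) < Real.sqrt n))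
    {v : V} (hv : v ∈ mS E) : n ≤ (HG.deg E v)^2 := by
  have hv2 : 2 ≤ HG.deg E v := mem_mS.mp hv
  have hvv : v ∈ HG.verts E := by rw [mS, Finset.mem_filter] at hv; exact hv.1
  have := hswd v hvv
  have hge : Real.sqrt n ≤ (HG.deg E v : ℝ) := by
    by_contra hlt
    exact this ⟨hv2, by linarith⟩
  have h2 : (n : ℝ) ≤ ((HG.deg E v : ℝ))^2 := by
    nlinarith [Real.sq_sqrt (by positivity : (0:ℝ) ≤ (n:ℝ)), Real.sqrt_nonneg (n:ℝ)]
  exact_mod_cast h2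

lemma K_le_deg {n : ℕ} {d : ℕ} (h : n ≤ d^2) : n.sqrt ≤ d := by
  calc n.sqrt ≤ (d^2).sqrt := Nat.sqrt_le_sqrt h
    _ = d := Nat.sqrt_eq' d

def Full (E : Finset (Finset V)) (n : ℕ) (e : Finset V) : Prop :=
  (∀ u ∈ e, 2 ≤ HG.deg E u → HG.deg E u = n.sqrt) ∧
    (e.filter (fun u => 2 ≤ HG.deg E u)).card = n.sqrt + 1

noncomputable def Tset (E : Finset (Finset V)) (n : ℕ) : Finset V :=
  (mS E).filter (fun v => HG.deg E v = n.sqrt ∧ ∀ e ∈ E, v ∈ e → Full E n e)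

lemma mem_Tset {E : Finset (Finset V)} {n : ℕ} {v : V} :
    v ∈ Tset E n ↔ v ∈ mS E ∧ HG.deg E v = n.sqrt ∧ ∀ e ∈ E, v ∈ e → Full E n e := by
  rw [Tset, Finset.mem_filter]

lemma T_facts {E : Finset (Finset V)} {n : ℕ}
    (hswd : ∀ v ∈ HG.verts E, ¬(2 ≤ HG.deg E v ∧ (HG.deg E v : ℝ) < Real.sqrt n))
    {v : V} (hv : v ∈ Tset E n) : n = n.sqrt ^ 2 ∧ 2 ≤ n.sqrt := by
  obtain ⟨hvm, hd, -⟩ := mem_Tset.mp hv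
  have h1 := multi_sq hswd hvm
  have h2 := Nat.sqrt_le' n
  have h3 := mem_mS.mp hvm
  rw [hd] at h1 h3
  exact ⟨by omega, h3⟩

lemma full_sum {E : Finset (Finset V)} {n : ℕ}
    (hswd : ∀ v ∈ HG.verts E, ¬(2 ≤ HG.deg E v ∧ (HG.deg E v : ℝ) < Real.sqrt n))
    {e : Finset V} (he : e ∈ E) (hf : Full E n e) :
    ∑ u ∈ e, (HG.deg E u - 1) = n - 1 ∧ n = n.sqrt ^ 2 ∧ 2 ≤ n.sqrt := by
  obtain ⟨hdeg, hcard⟩ := hf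
  have hne : (e.filter (fun u => 2 ≤ HG.deg E u)).Nonempty :=
    Finset.card_pos.mp (by omega)
  obtain ⟨x, hx⟩ := hne
  rw [Finset.mem_filter] at hx
  have hxm : x ∈ mS E := mem_mS.mpr hx.2
  have h1 := multi_sq hswd hxm
  have hdx := hdeg x hx.1 hx.2
  have h3 := hx.2
  rw [hdx] at h1 h3
  have h2 := Nat.sqrt_le' n
  have hnsq : n = n.sqrt ^ 2 := by omega
  refine ⟨?_, hnsq, h3⟩
  rw [← Finset.sum_filter_add_sum_filter_not e (fun u => 2 ≤ HG.deg E u)]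
  have hz : ∑ u ∈ e.filter (fun u => ¬ 2 ≤ HG.deg E u), (HG.deg E u - 1) = 0 := by
    apply Finset.sum_eq_zero
    intro u hu
    rw [Finset.mem_filter] at hu
    omega
  have hs : ∑ u ∈ e.filter (fun u => 2 ≤ HG.deg E u), (HG.deg E u - 1)
      = (n.sqrt + 1) * (n.sqrt - 1) := by
    rw [← hcard]
    rw [Finset.card_eq_sum_ones, Finset.sum_mul, one_mul]
    apply Finset.sum_congr rfl
    intro u hu
    rw [Finset.mem_filter] at hu
    rw [hdeg u hu.1 hu.2]
  rw [hz, hs]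
  have h1n : 1 ≤ n := by nlinarith
  have h1K : 1 ≤ n.sqrt := by omega
  zify [h1n, h1K]
  have hn : (n:ℤ) = (n.sqrt:ℤ)^2 := by exact_mod_cast hnsq
  linear_combination -hn
  
lemma full_meets {E : Finset (Finset V)} {n : ℕ}
    (hswd : ∀ v ∈ HG.verts E, ¬(2 ≤ HG.deg E v ∧ (HG.deg E v : ℝ) < Real.sqrt n))
    (hlin : HG.Linear E) (hE : E.card = n) (huniform : ∀ e ∈ E, e.card = n)
    {e : Finset V} (he : e ∈ E) (hf : Full E n e) :
    ∀ g ∈ E, g ≠ e → (e ∩ g).card = 1 := by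
  obtain ⟨hsum, hnsq, hK⟩ := full_sum hswd he hf
  have h0 : ∑ u ∈ e, HG.deg E u = ∑ g ∈ E, (e ∩ g).card := sum_deg_eq
  have h1 : ∑ g ∈ E.erase e, (e ∩ g).card + (e ∩ e).card = ∑ g ∈ E, (e ∩ g).card :=
    Finset.sum_erase_add E _ he
  have h3 : (e ∩ e).card = n := by rw [Finset.inter_self, huniform e he]
  have h4 := sum_sub_one (HG.deg E) (fun u hu => deg_pos he hu)
  have h5 := huniform e he
  have hcard : (E.erase e).card = n - 1 := by rw [Finset.card_erase_of_mem he, hE]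
  have hall : ∀ g ∈ E.erase e, (e ∩ g).card = 1 := by
    apply all_ones
    · intro g hg
      exact hlin e he g (Finset.mem_of_mem_erase hg) (Ne.symm (Finset.ne_of_mem_erase hg))
    · omega
  intro g hg hne
  exact hall g (Finset.mem_erase.mpr ⟨hne, hg⟩)

lemma Se_bound {E : Finset (Finset V)} {n : ℕ}
    (hswd : ∀ v ∈ HG.verts E, ¬(2 ≤ HG.deg E v ∧ (HG.deg E v : ℝ) < Real.sqrt n))
    (hlin : HG.Linear E) (hE : E.card = n) (huniform : ∀ e ∈ E, e.card = n)
    (hnsq : n = n.sqrt ^ 2) (hK : 2 ≤ n.sqrt)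
    {e : Finset V} (he : e ∈ E) :
    (e.filter (fun u => 2 ≤ HG.deg E u)).card ≤ n.sqrt + 1 := by
  set K := n.sqrt with hKdef
  set c := (e.filter (fun u => 2 ≤ HG.deg E u)).card with hc
  have hlb : c * (K - 1) ≤ ∑ u ∈ e.filter (fun u => 2 ≤ HG.deg E u), (HG.deg E u - 1) := by
    rw [hc, Finset.card_eq_sum_ones, Finset.sum_mul, one_mul]
    apply Finset.sum_le_sum
    intro u hu
    rw [Finset.mem_filter] at hu
    have : K ≤ HG.deg E u := K_le_deg (multi_sq hswd (mem_mS.mpr hu.2))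
    omega
  have hub : ∑ u ∈ e.filter (fun u => 2 ≤ HG.deg E u), (HG.deg E u - 1) ≤ n - 1 := by
    calc _ ≤ ∑ u ∈ e, (HG.deg E u - 1) :=
          Finset.sum_le_sum_of_subset (Finset.filter_subset _ _)
      _ ≤ n - 1 := budget hlin hE huniform he
  have hsq : n = K * K := by rw [hnsq]; ring
  by_contra hgt
  push_neg at hgt
  have hmul : (K + 2) * (K - 1) ≤ c * (K - 1) := Nat.mul_le_mul_right _ (by omega)
  have h1n : 1 ≤ n := by nlinarith
  have h1K : 1 ≤ K := by omega
  have key : (K + 2) * (K - 1) ≤ n - 1 := le_trans hmul (le_trans hlb hub)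
  zify [h1n, h1K] at key
  have hn : (n:ℤ) = (K:ℤ) * K := by exact_mod_cast hsq
  nlinarith [key, hn]

lemma T_full {E : Finset (Finset V)} {n : ℕ} {v : V} (hv : v ∈ Tset E n)
    {e : Finset V} (he : e ∈ E) (hve : v ∈ e) : Full E n e :=
  (mem_Tset.mp hv).2.2 e he hve

lemma T_trans {E : Finset (Finset V)} {n : ℕ}
    (hswd : ∀ v ∈ HG.verts E, ¬(2 ≤ HG.deg E v ∧ (HG.deg E v : ℝ) < Real.sqrt n))
    (hlin : HG.Linear E) (hE : E.card = n) (huniform : ∀ e ∈ E, e.card = n)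
    {u v w : V} (hu : u ∈ Tset E n) (hv : v ∈ Tset E n) (hw : w ∈ Tset E n)
    (huv : ¬ Adj E u v) (hvw : ¬ Adj E v w) : ¬ Adj E u w := by
  rintro ⟨hne, e, he, hue, hwe⟩
  by_cases huv' : u = v
  · exact hvw ⟨by rw [← huv']; exact hne, e, he, by rw [← huv']; exact hue, hwe⟩
  by_cases hvw' : v = w
  · exact huv ⟨by rw [hvw']; exact hne, e, he, hue, by rw [hvw']; exact hwe⟩
  have hvnote : v ∉ e := fun hve => huv ⟨huv', e, he, hue, hve⟩
  have hefull : Full E n e := T_full hu he hue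
  have hKfacts := T_facts hswd hv
  set K := n.sqrt with hKdef
  -- the map from edges through v into multivertices of e
  set G := E.filter (fun g => v ∈ g) with hG
  have hGcard : G.card = K := by
    rw [hG, ← HG.deg, (mem_Tset.mp hv).2.1]
  set M := e.filter (fun x => 2 ≤ HG.deg E x) with hM
  have hMcard : M.card = K + 1 := hefull.2
  have hmem : ∀ g ∈ G, ∃ x, x ∈ g ∧ x ∈ e ∧ 2 ≤ HG.deg E x ∧ x ≠ u ∧ x ≠ w ∧ x ≠ v := by
    intro g hg
    rw [hG, Finset.mem_filter] at hg
    obtain ⟨hgE, hvg⟩ := hg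
    have hgne : g ≠ e := fun h => hvnote (h ▸ hvg)
    have hgfull : Full E n g := T_full hv hgE hvg
    have hone : (g ∩ e).card = 1 := full_meets hswd hlin hE huniform hgE hgfull e he (fun h => hgne h.symm) 
    obtain ⟨x, hx⟩ := Finset.card_eq_one.mp hone
    have hxg : x ∈ g ∧ x ∈ e := by
      have : x ∈ g ∩ e := by rw [hx]; exact Finset.mem_singleton_self x
      exact Finset.mem_inter.mp this
    refine ⟨x, hxg.1, hxg.2, deg_two hgE he hgne hxg.1 hxg.2, ?_, ?_, ?_⟩
    · rintro rfl; exact huv ⟨huv', g, hgE, hxg.1, hvg⟩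
    · rintro rfl; exact hvw ⟨hvw', g, hgE, hvg, hxg.1⟩
    · rintro rfl; exact hvnote hxg.2
  classical
  set φ : Finset V → V := fun g => if h : ∃ x, x ∈ g ∧ x ∈ e ∧ 2 ≤ HG.deg E x ∧ x ≠ u ∧ x ≠ w ∧ x ≠ v then h.choose else v with hφ
  have hφ_spec : ∀ g ∈ G, φ g ∈ g ∧ φ g ∈ e ∧ 2 ≤ HG.deg E (φ g) ∧ φ g ≠ u ∧ φ g ≠ w ∧ φ g ≠ v := by
    intro g hg
    have h := hmem g hg
    rw [hφ]
    simp only [dif_pos h]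
    exact h.choose_spec
  have hinj : Set.InjOn φ ↑G := by
    intro g₁ hg₁ g₂ hg₂ heq
    by_contra hne12
    rw [Finset.mem_coe] at hg₁ hg₂
    have h1 := hφ_spec g₁ hg₁
    have h2 := hφ_spec g₂ hg₂
    rw [hG, Finset.mem_filter] at hg₁ hg₂
    have hv1 : v ∈ g₁ := hg₁.2
    have hv2 : v ∈ g₂ := hg₂.2
    have hg1E : g₁ ∈ E := hg₁.1
    have hg2E : g₂ ∈ E := hg₂.1
    have hsub : ({φ g₁, v} : Finset V) ⊆ g₁ ∩ g₂ := by
      intro x hx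
      rcases Finset.mem_insert.mp hx with rfl | hx
      · exact Finset.mem_inter.mpr ⟨h1.1, heq ▸ h2.1⟩
      · rw [Finset.mem_singleton] at hx; subst hx
        exact Finset.mem_inter.mpr ⟨hv1, hv2⟩
    have : 2 ≤ (g₁ ∩ g₂).card := by
      calc 2 = ({φ g₁, v} : Finset V).card := (Finset.card_pair h1.2.2.2.2.2).symm
        _ ≤ _ := Finset.card_le_card hsub
    have := hlin g₁ hg1E g₂ hg2E hne12
    omega
  have himage : ∀ g ∈ G, φ g ∈ (M.erase u).erase w := by
    intro g hg
    have h := hφ_spec g hg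
    refine Finset.mem_erase.mpr ⟨h.2.2.2.2.1, Finset.mem_erase.mpr ⟨h.2.2.2.1, ?_⟩⟩
    rw [hM, Finset.mem_filter]
    exact ⟨h.2.1, h.2.2.1⟩
  have hcard_le : G.card ≤ ((M.erase u).erase w).card :=
    Finset.card_le_card_of_injOn φ himage hinj
  have huM : u ∈ M := by
    rw [hM, Finset.mem_filter]
    exact ⟨hue, mem_mS.mp (Finset.mem_filter.mp hu).1⟩
  have hwM : w ∈ (M.erase u) := by
    refine Finset.mem_erase.mpr ⟨Ne.symm hne, ?_⟩
    rw [hM, Finset.mem_filter]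
    exact ⟨hwe, mem_mS.mp (Finset.mem_filter.mp hw).1⟩
  have hc1 : (M.erase u).card = K := by rw [Finset.card_erase_of_mem huM, hMcard]; omega
  have hc2 : ((M.erase u).erase w).card = K - 1 := by
    rw [Finset.card_erase_of_mem hwM, hc1]
  omega

def rel (E : Finset (Finset V)) (u w : V) : Prop := u = w ∨ ¬ Adj E u w

lemma rel_symm {E : Finset (Finset V)} {u w : V} (h : rel E u w) : rel E w u := by
  rcases h with h | h
  · exact Or.inl h.symm
  · exact Or.inr (fun ha => h ha.symm)

lemma rel_refl {E : Finset (Finset V)} (u : V) : rel E u u := Or.inl rfl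

noncomputable def cls (E : Finset (Finset V)) (n : ℕ) (v : V) : Finset V :=
  (Tset E n).filter (fun u => rel E v u)

lemma mem_cls {E : Finset (Finset V)} {n : ℕ} {v u : V} :
    u ∈ cls E n v ↔ u ∈ Tset E n ∧ rel E v u := by rw [cls, Finset.mem_filter]

lemma rel_trans {E : Finset (Finset V)} {n : ℕ}
    (hswd : ∀ v ∈ HG.verts E, ¬(2 ≤ HG.deg E v ∧ (HG.deg E v : ℝ) < Real.sqrt n))
    (hlin : HG.Linear E) (hE : E.card = n) (huniform : ∀ e ∈ E, e.card = n)
    {u v w : V} (hu : u ∈ Tset E n) (hv : v ∈ Tset E n) (hw : w ∈ Tset E n)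
    (h1 : rel E u v) (h2 : rel E v w) : rel E u w := by
  rcases h1 with rfl | h1
  · exact h2
  rcases h2 with rfl | h2
  · exact Or.inr h1
  exact Or.inr (T_trans hswd hlin hE huniform hu hv hw h1 h2)

lemma cls_eq {E : Finset (Finset V)} {n : ℕ}
    (hswd : ∀ v ∈ HG.verts E, ¬(2 ≤ HG.deg E v ∧ (HG.deg E v : ℝ) < Real.sqrt n))
    (hlin : HG.Linear E) (hE : E.card = n) (huniform : ∀ e ∈ E, e.card = n)
    {u v : V} (hu : u ∈ Tset E n) (hv : v ∈ Tset E n) (h : rel E v u) :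
    cls E n u = cls E n v := by
  ext x
  rw [mem_cls, mem_cls]
  constructor
  · rintro ⟨hx, hux⟩
    exact ⟨hx, rel_trans hswd hlin hE huniform hv hu hx h hux⟩
  · rintro ⟨hx, hvx⟩
    exact ⟨hx, rel_trans hswd hlin hE huniform hu hv hx (rel_symm h) hvx⟩

lemma all_eq_bound {α : Type*} {s : Finset α} {f : α → ℕ} {B : ℕ} (h1 : ∀ x ∈ s, f x ≤ B)
    (h2 : s.card * B ≤ ∑ x ∈ s, f x) : ∀ x ∈ s, f x = B := by
  intro x hx
  by_contra hne
  have hx0 : f x < B := by have := h1 x hx; omega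
  have hsum : ∑ y ∈ s, f y = ∑ y ∈ s.erase x, f y + f x := (Finset.sum_erase_add s f hx).symm
  have hb : ∑ y ∈ s.erase x, f y ≤ (s.erase x).card * B := by
    calc ∑ y ∈ s.erase x, f y ≤ ∑ _y ∈ s.erase x, B :=
          Finset.sum_le_sum (fun y hy => h1 y (Finset.mem_of_mem_erase hy))
      _ = (s.erase x).card * B := by rw [Finset.sum_const, smul_eq_mul]
  have hc : (s.erase x).card = s.card - 1 := Finset.card_erase_of_mem hx
  rw [hc] at hb
  have hcc : 1 ≤ s.card := Finset.card_pos.mpr ⟨x, hx⟩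
  have : (s.card - 1) * B + B = s.card * B := by
    have : s.card - 1 + 1 = s.card := by omega
    calc (s.card - 1) * B + B = ((s.card - 1) + 1) * B := by ring
      _ = s.card * B := by rw [this]
  omega

lemma CL_card {E : Finset (Finset V)} {n : ℕ}
    (hswd : ∀ v ∈ HG.verts E, ¬(2 ≤ HG.deg E v ∧ (HG.deg E v : ℝ) < Real.sqrt n))
    (hlin : HG.Linear E) (hE : E.card = n) (huniform : ∀ e ∈ E, e.card = n) :
    ((Tset E n).image (cls E n)).card ≤ n := by
  classical
  by_contra hcon
  push_neg at hcon
  set CL := (Tset E n).image (cls E n) with hCL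
  -- T is nonempty
  have hCLne : CL.Nonempty := Finset.card_pos.mp (by omega)
  obtain ⟨c₀, hc₀⟩ := hCLne
  obtain ⟨v₀, hv₀T, -⟩ := Finset.mem_image.mp hc₀
  set K := n.sqrt with hKdef
  obtain ⟨hnsq, hK2⟩ := T_facts hswd hv₀T
  -- representatives
  set ρ : Finset V → V := fun c => if h : c.Nonempty then h.choose else v₀ with hρ
  have hρ_spec : ∀ c ∈ CL, ρ c ∈ c ∧ c = cls E n (ρ c) ∧ ρ c ∈ Tset E n := by
    intro c hc
    obtain ⟨v, hvT, hvc⟩ := Finset.mem_image.mp hc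
    have hne : c.Nonempty := ⟨v, by rw [← hvc, mem_cls]; exact ⟨hvT, rel_refl v⟩⟩
    have hmem : ρ c ∈ c := by rw [hρ]; simp only [dif_pos hne]; exact hne.choose_spec
    have hmem' : ρ c ∈ cls E n v := by rw [hvc]; exact hmem
    rw [mem_cls] at hmem'
    exact ⟨hmem, by rw [cls_eq hswd hlin hE huniform hmem'.1 hvT hmem'.2, hvc], hmem'.1⟩
  set R := CL.image ρ with hR
  have hRT : R ⊆ Tset E n := by
    intro x hx
    obtain ⟨c, hc, hcx⟩ := Finset.mem_image.mp hx
    rw [← hcx]; exact (hρ_spec c hc).2.2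
  have hρinj : Set.InjOn ρ ↑CL := by
    intro c1 h1 c2 h2 heq
    rw [Finset.mem_coe] at h1 h2
    have s1 := (hρ_spec c1 h1).2.1
    have s2 := (hρ_spec c2 h2).2.1
    rw [s1, s2, heq]
  have hRcard : n + 1 ≤ R.card := by
    rw [hR, Finset.card_image_of_injOn hρinj]; omega
  have hRadj : ∀ x ∈ R, ∀ y ∈ R, x ≠ y → Adj E x y := by
    intro x hx y hy hne
    by_contra hna
    obtain ⟨c1, hc1, hcx⟩ := Finset.mem_image.mp hx
    obtain ⟨c2, hc2, hcy⟩ := Finset.mem_image.mp hy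
    have hxT := hRT hx
    have hyT := hRT hy
    have : cls E n x = cls E n y :=
      cls_eq hswd hlin hE huniform hxT hyT (rel_symm (Or.inr hna))
    have : c1 = c2 := by
      rw [(hρ_spec c1 hc1).2.1, (hρ_spec c2 hc2).2.1, hcx, hcy, this]
    exact hne (by rw [← hcx, ← hcy, this])
  -- counting: for each v ∈ R, every edge through v has exactly K+1 R-vertices
  have hdegR : ∀ v ∈ R, HG.deg E v = K := fun v hv => (mem_Tset.mp (hRT hv)).2.1
  have hmain : ∀ v ∈ R, ∀ g ∈ E, v ∈ g → (R ∩ g).card = K + 1 := by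
    intro v hvR g hg hvg
    have hvT := hRT hvR
    set Gv := E.filter (fun g => v ∈ g) with hGv
    have hGvcard : Gv.card = K := by rw [hGv, ← HG.deg, hdegR v hvR]
    have hcover : R.erase v ⊆ Gv.biUnion (fun g => (R ∩ g).erase v) := by
      intro u hu
      have huR := Finset.mem_of_mem_erase hu
      have hune : u ≠ v := Finset.ne_of_mem_erase hu
      obtain ⟨-, e, he, hve', hue'⟩ := hRadj v hvR u huR (Ne.symm hune)
      exact Finset.mem_biUnion.mpr ⟨e, Finset.mem_filter.mpr ⟨he, hve'⟩,
        Finset.mem_erase.mpr ⟨hune, Finset.mem_inter.mpr ⟨huR, hue'⟩⟩⟩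
    have hbound : ∀ g' ∈ Gv, ((R ∩ g').erase v).card ≤ K := by
      intro g' hg'
      rw [hGv, Finset.mem_filter] at hg'
      have hfull : Full E n g' := T_full hvT hg'.1 hg'.2
      have hsub : (R ∩ g').erase v ⊆ (g'.filter (fun u => 2 ≤ HG.deg E u)).erase v := by
        intro x hx
        have hx1 := Finset.mem_of_mem_erase hx
        rw [Finset.mem_inter] at hx1
        refine Finset.mem_erase.mpr ⟨Finset.ne_of_mem_erase hx, Finset.mem_filter.mpr
          ⟨hx1.2, mem_mS.mp (Finset.mem_filter.mp (hRT hx1.1)).1⟩⟩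
      calc ((R ∩ g').erase v).card ≤ ((g'.filter (fun u => 2 ≤ HG.deg E u)).erase v).card :=
            Finset.card_le_card hsub
        _ = K := by
            rw [Finset.card_erase_of_mem (Finset.mem_filter.mpr
              ⟨hg'.2, mem_mS.mp (Finset.mem_filter.mp hvT).1⟩), hfull.2]
            omega
    have hchain : n ≤ ∑ g' ∈ Gv, ((R ∩ g').erase v).card := by
      calc n ≤ (R.erase v).card := by rw [Finset.card_erase_of_mem hvR]; omega
        _ ≤ (Gv.biUnion (fun g => (R ∩ g).erase v)).card := Finset.card_le_card hcover
        _ ≤ ∑ g' ∈ Gv, ((R ∩ g').erase v).card := Finset.card_biUnion_le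
    have hsumK : Gv.card * K ≤ ∑ g' ∈ Gv, ((R ∩ g').erase v).card := by
      rw [hGvcard]
      have : n = K * K := by rw [hnsq]; ring
      omega
    have heach := all_eq_bound hbound hsumK g (Finset.mem_filter.mpr ⟨hg, hvg⟩)
    have hvRg : v ∈ R ∩ g := Finset.mem_inter.mpr ⟨hvR, hvg⟩
    have := Finset.card_erase_of_mem hvRg
    have hpos : 1 ≤ (R ∩ g).card := Finset.card_pos.mpr ⟨v, hvRg⟩
    omega
  -- double counting over the edges meeting R
  set F := E.filter (fun g => (R ∩ g).Nonempty) with hF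
  have hsum1 : ∑ v ∈ R, HG.deg E v = ∑ g ∈ E, (R ∩ g).card := sum_deg_eq
  have hsum2 : ∑ g ∈ E, (R ∩ g).card = ∑ g ∈ F, (R ∩ g).card := by
    rw [hF]
    rw [← Finset.sum_filter_add_sum_filter_not E (fun g => (R ∩ g).Nonempty)]
    have : ∑ g ∈ E.filter (fun g => ¬ (R ∩ g).Nonempty), (R ∩ g).card = 0 := by
      apply Finset.sum_eq_zero
      intro g hg
      rw [Finset.mem_filter, Finset.not_nonempty_iff_eq_empty] at hg
      rw [hg.2, Finset.card_empty]
    omega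
  have hsum3 : ∑ g ∈ F, (R ∩ g).card = F.card * (K + 1) := by
    rw [Finset.card_eq_sum_ones, Finset.sum_mul, one_mul]
    apply Finset.sum_congr rfl
    intro g hg
    rw [hF, Finset.mem_filter] at hg
    obtain ⟨x, hx⟩ := hg.2
    rw [Finset.mem_inter] at hx
    exact hmain x hx.1 g hg.1 hx.2
  have hsum4 : ∑ v ∈ R, HG.deg E v = R.card * K := by
    rw [Finset.card_eq_sum_ones, Finset.sum_mul, one_mul]
    exact Finset.sum_congr rfl (fun v hv => hdegR v hv)
  -- R.card = n + 1 exactly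
  have hub : ∀ v ∈ R, (R.erase v).card ≤ n := by
    intro v hvR
    have hvT := hRT hvR
    set Gv := E.filter (fun g => v ∈ g) with hGv
    have hGvcard : Gv.card = K := by rw [hGv, ← HG.deg, hdegR v hvR]
    have hcover : R.erase v ⊆ Gv.biUnion (fun g => (R ∩ g).erase v) := by
      intro u hu
      have huR := Finset.mem_of_mem_erase hu
      have hune : u ≠ v := Finset.ne_of_mem_erase hu
      obtain ⟨-, e, he, hve', hue'⟩ := hRadj v hvR u huR (Ne.symm hune)
      exact Finset.mem_biUnion.mpr ⟨e, Finset.mem_filter.mpr ⟨he, hve'⟩,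
        Finset.mem_erase.mpr ⟨hune, Finset.mem_inter.mpr ⟨huR, hue'⟩⟩⟩
    have hbound : ∀ g' ∈ Gv, ((R ∩ g').erase v).card ≤ K := by
      intro g' hg'
      rw [hGv, Finset.mem_filter] at hg'
      have hfull : Full E n g' := T_full hvT hg'.1 hg'.2
      have hsub : (R ∩ g').erase v ⊆ (g'.filter (fun u => 2 ≤ HG.deg E u)).erase v := by
        intro x hx
        have hx1 := Finset.mem_of_mem_erase hx
        rw [Finset.mem_inter] at hx1
        refine Finset.mem_erase.mpr ⟨Finset.ne_of_mem_erase hx, Finset.mem_filter.mpr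
          ⟨hx1.2, mem_mS.mp (Finset.mem_filter.mp (hRT hx1.1)).1⟩⟩
      calc ((R ∩ g').erase v).card ≤ ((g'.filter (fun u => 2 ≤ HG.deg E u)).erase v).card :=
            Finset.card_le_card hsub
        _ = K := by
            rw [Finset.card_erase_of_mem (Finset.mem_filter.mpr
              ⟨hg'.2, mem_mS.mp (Finset.mem_filter.mp hvT).1⟩), hfull.2]
            omega
    calc (R.erase v).card ≤ (Gv.biUnion (fun g => (R ∩ g).erase v)).card :=
          Finset.card_le_card hcover
      _ ≤ ∑ g' ∈ Gv, ((R ∩ g').erase v).card := Finset.card_biUnion_le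
      _ ≤ Gv.card * K := by
          calc ∑ g' ∈ Gv, ((R ∩ g').erase v).card ≤ ∑ _g ∈ Gv, K := Finset.sum_le_sum hbound
            _ = Gv.card * K := by rw [Finset.sum_const, smul_eq_mul]
      _ = n := by rw [hGvcard, hnsq]; ring
  obtain ⟨v, hvR⟩ : R.Nonempty := Finset.card_pos.mp (by omega)
  have hRcard' : R.card = n + 1 := by
    have h1 := hub v hvR
    have h2 := Finset.card_erase_of_mem hvR
    omega
  have hkey : F.card * (K + 1) = (n + 1) * K := by
    rw [← hsum3, ← hsum2, ← hsum1, hsum4, hRcard']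
  have hdvd : ((K:ℤ) + 1) ∣ ((K:ℤ) * K + 1) * K := by
    refine ⟨(F.card : ℤ), ?_⟩
    have hn' : (n:ℤ) = (K:ℤ) * K := by
      have : n = K * K := by rw [hnsq]; ring
      exact_mod_cast this
    have := hkey
    zify at this
    rw [← hn']
    linarith [this]
  have h2dvd : ((K:ℤ) + 1) ∣ 2 := by
    have hd1 : ((K:ℤ) + 1) ∣ ((K:ℤ) + 1) * ((K:ℤ) * K - K + 2) := Dvd.intro _ rfl
    have := dvd_sub hd1 hdvd
    have heq : ((K:ℤ) + 1) * ((K:ℤ) * K - K + 2) - ((K:ℤ) * K + 1) * K = 2 := by ring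
    rwa [heq] at this
  have hle : ((K:ℤ) + 1) ≤ 2 := Int.le_of_dvd (by norm_num) h2dvd
  have : (2:ℤ) ≤ (K:ℤ) := by exact_mod_cast hK2
  omega

lemma sum_squeeze {α : Type*} {s : Finset α} {f g : α → ℕ} (h1 : ∀ x ∈ s, f x ≤ g x)
    (h2 : ∑ x ∈ s, g x ≤ ∑ x ∈ s, f x) : ∀ x ∈ s, f x = g x := by
  intro x hx
  by_contra hne
  have hlt : f x < g x := lt_of_le_of_ne (h1 x hx) hne
  have : ∑ y ∈ s, f y < ∑ y ∈ s, g y :=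
    Finset.sum_lt_sum (fun y hy => h1 y hy) ⟨x, hx, hlt⟩
  omega

lemma greedy_bound {E : Finset (Finset V)} {n : ℕ}
    (hswd : ∀ v ∈ HG.verts E, ¬(2 ≤ HG.deg E v ∧ (HG.deg E v : ℝ) < Real.sqrt n))
    (hlin : HG.Linear E) (hE : E.card = n) (huniform : ∀ e ∈ E, e.card = n)
    {v : V} (hv : v ∈ mS E) (hvT : v ∉ Tset E n)
    {X : Finset V} (hXS : X ⊆ mS E) (hvX : v ∉ X)
    (hdegX : ∀ u ∈ X, u ∈ Tset E n ∨ HG.deg E v ≤ HG.deg E u) :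
    (X.filter (fun u => Adj E u v)).card ≤ n - 1 := by
  classical
  set d := HG.deg E v with hd
  have hd2 : 2 ≤ d := mem_mS.mp hv
  have hdsq : n ≤ d ^ 2 := multi_sq hswd hv
  have hdn : d ≤ n := by
    rw [hd, HG.deg, ← hE]
    exact Finset.card_le_card (Finset.filter_subset _ _)
  set Gv := E.filter (fun e => v ∈ e) with hGv
  have hGvcard : Gv.card = d := rfl
  set A : Finset V → Finset V := fun e => (X ∩ e).erase v with hA
  set N := X.filter (fun u => Adj E u v) with hN
  -- step 1 : degrees of candidates
  have hstep1 : ∀ u ∈ N, d ≤ HG.deg E u := by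
    intro u hu
    rw [hN, Finset.mem_filter] at hu
    obtain ⟨huX, hadj⟩ := hu
    rcases hdegX u huX with huT | hle
    · obtain ⟨hune, e, he, hue, hve⟩ := hadj
      have hfull : Full E n e := T_full huT he hue
      have := hfull.1 v hve (mem_mS.mp hv)
      have := (mem_Tset.mp huT).2.1
      omega
    · exact hle
  -- step 2 : N is the disjoint union of the A e
  have hNeq : N = Gv.biUnion A := by
    ext u
    rw [hN, Finset.mem_filter, Finset.mem_biUnion]
    constructor
    · rintro ⟨huX, hune, e, he, hue, hve⟩
      exact ⟨e, Finset.mem_filter.mpr ⟨he, hve⟩,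
        Finset.mem_erase.mpr ⟨hune, Finset.mem_inter.mpr ⟨huX, hue⟩⟩⟩
    · rintro ⟨e, he, hu⟩
      rw [hGv, Finset.mem_filter] at he
      have h1 := Finset.mem_of_mem_erase hu
      rw [Finset.mem_inter] at h1
      exact ⟨h1.1, Finset.ne_of_mem_erase hu, e, he.1, h1.2, he.2⟩
  have hdisj : ∀ e₁ ∈ Gv, ∀ e₂ ∈ Gv, e₁ ≠ e₂ → Disjoint (A e₁) (A e₂) := by
    intro e₁ h1 e₂ h2 hne
    rw [hGv, Finset.mem_filter] at h1 h2
    rw [Finset.disjoint_left]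
    intro x hx1 hx2
    have hx1' := Finset.mem_of_mem_erase hx1
    have hx2' := Finset.mem_of_mem_erase hx2
    rw [Finset.mem_inter] at hx1' hx2'
    have hxne : x ≠ v := Finset.ne_of_mem_erase hx1
    have hsub : ({x, v} : Finset V) ⊆ e₁ ∩ e₂ := by
      intro y hy
      rcases Finset.mem_insert.mp hy with rfl | hy
      · exact Finset.mem_inter.mpr ⟨hx1'.2, hx2'.2⟩
      · rw [Finset.mem_singleton] at hy; subst hy
        exact Finset.mem_inter.mpr ⟨h1.2, h2.2⟩
    have : 2 ≤ (e₁ ∩ e₂).card := by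
      calc 2 = ({x, v} : Finset V).card := (Finset.card_pair hxne).symm
        _ ≤ _ := Finset.card_le_card hsub
    have := hlin e₁ h1.1 e₂ h2.1 hne
    omega
  have hNcard : N.card = ∑ e ∈ Gv, (A e).card := by
    rw [hNeq]; exact Finset.card_biUnion hdisj
  -- step 3 : per-edge sums
  have hsubset : ∀ e ∈ Gv, insert v (A e) ⊆ e := by
    intro e he
    rw [hGv, Finset.mem_filter] at he
    intro x hx
    rcases Finset.mem_insert.mp hx with rfl | hx
    · exact he.2
    · exact (Finset.mem_inter.mp (Finset.mem_of_mem_erase hx)).2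
  have hvA : ∀ e, v ∉ A e := fun e h => (Finset.ne_of_mem_erase h) rfl
  have hAN : ∀ e ∈ Gv, A e ⊆ N := by
    intro e he
    rw [hNeq]
    intro x hx
    exact Finset.mem_biUnion.mpr ⟨e, he, hx⟩
  have hse : ∀ e ∈ Gv, (d - 1) + ∑ u ∈ A e, (HG.deg E u - 1) ≤ n - 1 := by
    intro e he
    have hsum : ∑ u ∈ insert v (A e), (HG.deg E u - 1) = (d - 1) + ∑ u ∈ A e, (HG.deg E u - 1) := by
      rw [Finset.sum_insert (hvA e)]
    have heE : e ∈ E := (Finset.mem_filter.mp (by rw [hGv] at he; exact he)).1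
    calc (d - 1) + ∑ u ∈ A e, (HG.deg E u - 1) = ∑ u ∈ insert v (A e), (HG.deg E u - 1) := hsum.symm
      _ ≤ ∑ u ∈ e, (HG.deg E u - 1) := Finset.sum_le_sum_of_subset (hsubset e he)
      _ ≤ n - 1 := budget hlin hE huniform heE
  have hcs : ∀ e ∈ Gv, (A e).card * (d - 1) ≤ ∑ u ∈ A e, (HG.deg E u - 1) := by
    intro e he
    rw [Finset.card_eq_sum_ones, Finset.sum_mul, one_mul]
    apply Finset.sum_le_sum
    intro u hu
    have := hstep1 u (hAN e he hu)
    omega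
  -- main contradiction
  by_contra hcon
  push_neg at hcon
  have hNn : n ≤ N.card := by omega
  have h1 : ∑ e ∈ Gv, ∑ u ∈ A e, (HG.deg E u - 1) ≤ d * (n - d) := by
    calc ∑ e ∈ Gv, ∑ u ∈ A e, (HG.deg E u - 1) ≤ ∑ _e ∈ Gv, (n - d) := by
          apply Finset.sum_le_sum
          intro e he
          have := hse e he
          omega
      _ = d * (n - d) := by rw [Finset.sum_const, smul_eq_mul, hGvcard]
  have h2 : (d - 1) * n ≤ ∑ e ∈ Gv, ∑ u ∈ A e, (HG.deg E u - 1) := by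
    calc (d - 1) * n ≤ (d - 1) * N.card := Nat.mul_le_mul_left _ hNn
      _ = ∑ e ∈ Gv, (A e).card * (d - 1) := by
          rw [hNcard, Finset.mul_sum]
          exact Finset.sum_congr rfl (fun e _ => by ring)
      _ ≤ _ := Finset.sum_le_sum hcs
  -- derive n = d * d
  have hnd : n = d * d := by
    have hz : ((d:ℤ) - 1) * n ≤ (d:ℤ) * ((n:ℤ) - d) := by
      have h3 : (d - 1) * n ≤ d * (n - d) := le_trans h2 h1
      zify [hd2, hdn] at h3
      convert h3 using 2
      omega
    have hsq' : (n:ℤ) ≤ (d:ℤ)^2 := by exact_mod_cast hdsq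
    nlinarith
  -- equality analysis : every edge through v is Full, so v ∈ Tset; contradiction
  apply hvT
  have hKd : n.sqrt = d := by rw [hnd, ← sq, Nat.sqrt_eq']
  have hndsub : d * (n - d) = (d - 1) * n := by
    zify [hdn, (by omega : 1 ≤ d)]
    have hnZ : (n:ℤ) = (d:ℤ) * d := by exact_mod_cast hnd
    linarith [hnZ, mul_self_nonneg ((d:ℤ) - 1)]
  have hall : ∀ e ∈ Gv, ∑ u ∈ A e, (HG.deg E u - 1) = n - d := by
    apply all_eq_bound (B := n - d)
    · intro e he
      have := hse e he
      omega
    · rw [hGvcard]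
      calc d * (n - d) = (d - 1) * n := hndsub
        _ ≤ _ := h2
  have hsum_eq : ∑ e ∈ Gv, (A e).card * (d - 1) = ∑ e ∈ Gv, ∑ u ∈ A e, (HG.deg E u - 1) := by
    have hge : ∑ e ∈ Gv, (A e).card * (d - 1) ≥ (d - 1) * n := by
      calc ∑ e ∈ Gv, (A e).card * (d - 1) = N.card * (d - 1) := by
            rw [hNcard, Finset.sum_mul]
        _ ≥ n * (d - 1) := Nat.mul_le_mul_right _ hNn
        _ = (d - 1) * n := by ring
    have hle : ∑ e ∈ Gv, (A e).card * (d - 1) ≤ ∑ e ∈ Gv, ∑ u ∈ A e, (HG.deg E u - 1) :=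
      Finset.sum_le_sum hcs
    have : ∑ e ∈ Gv, ∑ u ∈ A e, (HG.deg E u - 1) = (d - 1) * n := by
      rw [show ∑ e ∈ Gv, ∑ u ∈ A e, (HG.deg E u - 1) = ∑ _e ∈ Gv, (n - d) from
        Finset.sum_congr rfl hall, Finset.sum_const, smul_eq_mul, hGvcard, hndsub]
    omega
  have hce : ∀ e ∈ Gv, (A e).card * (d - 1) = ∑ u ∈ A e, (HG.deg E u - 1) :=
    sum_squeeze hcs (le_of_eq hsum_eq.symm)
  have hcard_e : ∀ e ∈ Gv, (A e).card = d := by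
    intro e he
    have h5 := hce e he
    rw [hall e he] at h5
    have : n - d = d * (d - 1) := by
      rw [hnd, Nat.mul_sub, mul_one]
    rw [this] at h5
    have hd1 : 1 ≤ d - 1 := by omega
    have := Nat.eq_of_mul_eq_mul_right (by omega : 0 < d - 1) (h5.trans (by ring))
    omega
  have hdeg_e : ∀ e ∈ Gv, ∀ u ∈ A e, HG.deg E u = d := by
    intro e he
    have hpt : ∀ u ∈ A e, d - 1 ≤ HG.deg E u - 1 := by
      intro u hu
      have := hstep1 u (hAN e he hu)
      omega
    have hsum : ∑ u ∈ A e, (HG.deg E u - 1) ≤ ∑ u ∈ A e, (d - 1) := by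
      rw [Finset.sum_const, smul_eq_mul, hcard_e e he]
      rw [hall e he, hnd, Nat.mul_sub, mul_one]
    have hsq := sum_squeeze (f := fun u => (d-1)) (g := fun u => HG.deg E u - 1) hpt hsum
    intro u hu
    have h6 : d - 1 = HG.deg E u - 1 := hsq u hu
    have := hstep1 u (hAN e he hu)
    omega
  rw [mem_Tset]
  refine ⟨hv, by rw [hKd], ?_⟩
  intro e heE hve
  have heGv : e ∈ Gv := Finset.mem_filter.mpr ⟨heE, hve⟩
  -- the rest of e has degree ≤ 1
  have hrest : ∀ u ∈ e, u ∉ insert v (A e) → HG.deg E u = 1 := by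
    intro u hue hunot
    have hsplit : ∑ u ∈ e \ insert v (A e), (HG.deg E u - 1)
        + ∑ u ∈ insert v (A e), (HG.deg E u - 1) = ∑ u ∈ e, (HG.deg E u - 1) :=
      Finset.sum_sdiff (hsubset e heGv)
    have hins : ∑ u ∈ insert v (A e), (HG.deg E u - 1) = n - 1 := by
      rw [Finset.sum_insert (hvA e), hall e heGv]
      omega
    have hbud := budget hlin hE huniform heE
    have hzero : ∑ u ∈ e \ insert v (A e), (HG.deg E u - 1) = 0 := by omega
    have := (Finset.sum_eq_zero_iff).mp hzero u (Finset.mem_sdiff.mpr ⟨hue, hunot⟩)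
    have := deg_pos heE hue
    omega
  constructor
  · intro u hue hu2
    rw [hKd]
    by_cases hcase : u ∈ insert v (A e)
    · rcases Finset.mem_insert.mp hcase with rfl | hcase
      · rfl
      · exact hdeg_e e heGv u hcase
    · have := hrest u hue hcase
      omega
  · have : e.filter (fun u => 2 ≤ HG.deg E u) = insert v (A e) := by
      ext u
      rw [Finset.mem_filter]
      constructor
      · rintro ⟨hue, hu2⟩
        by_contra hcon2
        have := hrest u hue hcon2
        omega
      · intro hu
        refine ⟨hsubset e heGv hu, ?_⟩
        rcases Finset.mem_insert.mp hu with rfl | hu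
        · exact hd2
        · rw [hdeg_e e heGv u hu]; exact hd2
    rw [this, Finset.card_insert_of_notMem (hvA e), hcard_e e heGv, hKd]

lemma exists_injOn_finset {α β : Type*} [Nonempty β] (s : Finset α) (t : Finset β)
    (h : s.card ≤ t.card) : ∃ f : α → β, (∀ a ∈ s, f a ∈ t) ∧ Set.InjOn f ↑s := by
  have hs : (↑s : Set α).Finite := s.finite_toSet
  have hle : (↑s : Set α).encard ≤ (↑t : Set β).encard := by
    rw [Set.encard_coe_eq_coe_finsetCard, Set.encard_coe_eq_coe_finsetCard]
    exact_mod_cast h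
  obtain ⟨f, hf1, hf2⟩ := hs.exists_injOn_of_encard_le hle
  exact ⟨f, fun a ha => hf1 (by simpa using ha), hf2⟩

lemma Tsub {E : Finset (Finset V)} {n : ℕ} : Tset E n ⊆ mS E := by
  intro x hx; exact (Finset.mem_filter.mp hx).1

lemma phase2 {E : Finset (Finset V)} {n : ℕ}
    (hswd : ∀ v ∈ HG.verts E, ¬(2 ≤ HG.deg E v ∧ (HG.deg E v : ℝ) < Real.sqrt n))
    (hlin : HG.Linear E) (hE : E.card = n) (huniform : ∀ e ∈ E, e.card = n) (hn : 0 < n)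
    (g₀ : V → Fin n)
    (hg₀ : ∀ e ∈ E, ∀ u ∈ e, ∀ w ∈ e, u ∈ Tset E n → w ∈ Tset E n → u ≠ w → g₀ u ≠ g₀ w) :
    ∀ (m : ℕ) (D : Finset V), D.card = m → D ⊆ mS E \ Tset E n →
    ∃ g : V → Fin n, (∀ x, x ∉ D → g x = g₀ x) ∧
      (∀ e ∈ E, ∀ u ∈ e, ∀ w ∈ e, u ∈ Tset E n ∪ D → w ∈ Tset E n ∪ D → u ≠ w →
        g u ≠ g w) := by
  intro m
  induction m with
  | zero =>
    intro D hcard _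
    rw [Finset.card_eq_zero] at hcard
    subst hcard
    refine ⟨g₀, fun x _ => rfl, ?_⟩
    intro e he u hu w hw humem hwmem hne
    rw [Finset.union_empty] at humem hwmem
    exact hg₀ e he u hu w hw humem hwmem hne
  | succ m ih =>
    intro D hcard hD
    have hDne : D.Nonempty := Finset.card_pos.mp (by omega)
    obtain ⟨v, hvD, hvmin⟩ := Finset.exists_min_image D (HG.deg E) hDne
    have hvS : v ∈ mS E := (Finset.mem_sdiff.mp (hD hvD)).1
    have hvT : v ∉ Tset E n := (Finset.mem_sdiff.mp (hD hvD)).2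
    set D' := D.erase v with hD'
    have hD'card : D'.card = m := by
      rw [hD', Finset.card_erase_of_mem hvD]; omega
    have hD'sub : D' ⊆ mS E \ Tset E n := fun x hx => hD (Finset.mem_of_mem_erase hx)
    obtain ⟨g, hg_agree, hg_prop⟩ := ih D' hD'card hD'sub
    set X := Tset E n ∪ D' with hX
    have hXS : X ⊆ mS E := by
      intro x hx
      rcases Finset.mem_union.mp hx with hx | hx
      · exact Tsub hx
      · exact (Finset.mem_sdiff.mp (hD'sub hx)).1
    have hvX : v ∉ X := by
      rw [hX, Finset.mem_union]
      rintro (h | h)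
      · exact hvT h
      · exact (Finset.notMem_erase v D) h
    have hdegX : ∀ u ∈ X, u ∈ Tset E n ∨ HG.deg E v ≤ HG.deg E u := by
      intro u hu
      rcases Finset.mem_union.mp hu with hu | hu
      · exact Or.inl hu
      · exact Or.inr (hvmin u (Finset.mem_of_mem_erase hu))
    have hNcard := greedy_bound hswd hlin hE huniform hvS hvT hXS hvX hdegX
    set N := X.filter (fun u => Adj E u v) with hN
    have himg : ((N.image g) : Finset (Fin n)) ≠ Finset.univ := by
      intro h
      have h1 : (N.image g).card ≤ N.card := Finset.card_image_le
      have h2 : (Finset.univ : Finset (Fin n)).card = n := by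
        rw [Finset.card_univ, Fintype.card_fin]
      rw [h] at h1
      omega
    obtain ⟨c, hc⟩ : ∃ c : Fin n, c ∉ N.image g := by
      by_contra hall
      push_neg at hall
      exact himg (Finset.eq_univ_iff_forall.mpr hall)
    refine ⟨Function.update g v c, ?_, ?_⟩
    · intro x hx
      have hxv : x ≠ v := fun h => hx (h ▸ hvD)
      rw [Function.update_of_ne hxv]
      exact hg_agree x (fun h => hx (Finset.mem_of_mem_erase h))
    · intro e he u hu w hw humem hwmem hne
      have hswap : ∀ {a b : V}, a ∈ e → b ∈ e → a ∈ Tset E n ∪ D → b ∈ Tset E n ∪ D →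
          b ≠ v → a = v → Function.update g v c a ≠ Function.update g v c b := by
        intro a b ha hb hamem hbmem hbv hav
        subst hav
        rw [Function.update_self, Function.update_of_ne hbv]
        have hbX : b ∈ X := by
          rw [hX, Finset.mem_union]
          rcases Finset.mem_union.mp hbmem with h | h
          · exact Or.inl h
          · exact Or.inr (Finset.mem_erase.mpr ⟨hbv, h⟩)
        have hbN : b ∈ N := Finset.mem_filter.mpr ⟨hbX, ⟨hbv, e, he, hb, ha⟩⟩
        intro hcontra
        exact hc (Finset.mem_image.mpr ⟨b, hbN, hcontra.symm⟩)
      by_cases huv : u = v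
      · exact hswap hu hw humem hwmem (fun h => hne (huv.trans h.symm)) huv
      · by_cases hwv : w = v
        · exact fun h => (hswap hw hu hwmem humem
            (fun h' => hne (h'.trans hwv.symm)) hwv) h.symm
        · rw [Function.update_of_ne huv, Function.update_of_ne hwv]
          have humem' : u ∈ Tset E n ∪ D' := by
            rcases Finset.mem_union.mp humem with h | h
            · exact Finset.mem_union.mpr (Or.inl h)
            · exact Finset.mem_union.mpr (Or.inr (Finset.mem_erase.mpr ⟨huv, h⟩))
          have hwmem' : w ∈ Tset E n ∪ D' := by
            rcases Finset.mem_union.mp hwmem with h | h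
            · exact Finset.mem_union.mpr (Or.inl h)
            · exact Finset.mem_union.mpr (Or.inr (Finset.mem_erase.mpr ⟨hwv, h⟩))
          exact hg_prop e he u hu w hw humem' hwmem' hne

lemma exists_proper {E : Finset (Finset V)} {n : ℕ}
    (hswd : ∀ v ∈ HG.verts E, ¬(2 ≤ HG.deg E v ∧ (HG.deg E v : ℝ) < Real.sqrt n))
    (hlin : HG.Linear E) (hE : E.card = n) (huniform : ∀ e ∈ E, e.card = n) (hn : 0 < n) :
    ∃ f : V → Fin n, HG.Proper E f := by
  classical
  haveI : Nonempty (Fin n) := ⟨⟨0, hn⟩⟩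
  set CL := (Tset E n).image (cls E n) with hCL
  have hCLcard : CL.card ≤ n := CL_card hswd hlin hE huniform
  obtain ⟨ι, -, hι⟩ := exists_injOn_finset CL (Finset.univ : Finset (Fin n)) (by
    rw [Finset.card_univ, Fintype.card_fin]; exact hCLcard)
  set g₀ : V → Fin n := fun x => if x ∈ Tset E n then ι (cls E n x) else ⟨0, hn⟩ with hg₀def
  have hg₀ : ∀ e ∈ E, ∀ u ∈ e, ∀ w ∈ e, u ∈ Tset E n → w ∈ Tset E n → u ≠ w →
      g₀ u ≠ g₀ w := by
    intro e he u hu w hw huT hwT hne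
    have hclsne : cls E n u ≠ cls E n w := by
      intro heq
      have hw_in : w ∈ cls E n w := mem_cls.mpr ⟨hwT, rel_refl w⟩
      rw [← heq] at hw_in
      rcases (mem_cls.mp hw_in).2 with h | h
      · exact hne h
      · exact h ⟨hne, e, he, hu, hw⟩
    have h1 : g₀ u = ι (cls E n u) := by rw [hg₀def]; simp only [if_pos huT]
    have h2 : g₀ w = ι (cls E n w) := by rw [hg₀def]; simp only [if_pos hwT]
    rw [h1, h2]
    intro heq
    exact hclsne (hι (Finset.mem_coe.mpr (Finset.mem_image.mpr ⟨u, huT, rfl⟩))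
      (Finset.mem_coe.mpr (Finset.mem_image.mpr ⟨w, hwT, rfl⟩)) heq)
  obtain ⟨g, -, hg⟩ := phase2 hswd hlin hE huniform hn g₀ hg₀
    (mS E \ Tset E n).card (mS E \ Tset E n) rfl (le_refl _)
  have hgS : ∀ e ∈ E, ∀ u ∈ e, ∀ w ∈ e, u ∈ mS E → w ∈ mS E → u ≠ w → g u ≠ g w := by
    intro e he u hu w hw hum hwm hne
    have hmem : ∀ {x : V}, x ∈ mS E → x ∈ Tset E n ∪ (mS E \ Tset E n) := by
      intro x hx
      by_cases hxT : x ∈ Tset E n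
      · exact Finset.mem_union.mpr (Or.inl hxT)
      · exact Finset.mem_union.mpr (Or.inr (Finset.mem_sdiff.mpr ⟨hx, hxT⟩))
    exact hg e he u hu w hw (hmem hum) (hmem hwm) hne
  -- phase 3 : extend to degree-one vertices
  have hpsi : ∀ e ∈ E, ∃ ψ : V → Fin n,
      (∀ x ∈ e \ (e.filter (fun y => y ∈ mS E)), ψ x ∈ ((e.filter (fun y => y ∈ mS E)).image g)ᶜ) ∧
      Set.InjOn ψ ↑(e \ (e.filter (fun y => y ∈ mS E))) := by
    intro e he
    apply exists_injOn_finset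
    have hMe : (e.filter (fun y => y ∈ mS E)) ⊆ e := Finset.filter_subset _ _
    have h1 : (e \ (e.filter (fun y => y ∈ mS E))).card = n - (e.filter (fun y => y ∈ mS E)).card := by
      rw [Finset.card_sdiff_of_subset hMe, huniform e he]
    have himgcard : ((e.filter (fun y => y ∈ mS E)).image g).card
        = (e.filter (fun y => y ∈ mS E)).card := by
      apply Finset.card_image_of_injOn
      intro x hx y hy heq
      rw [Finset.mem_coe, Finset.mem_filter] at hx hy
      by_contra hne
      exact hgS e he x hx.1 y hy.1 hx.2 hy.2 hne heq
    have h2 : (((e.filter (fun y => y ∈ mS E)).image g)ᶜ : Finset (Fin n)).card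
        = n - (e.filter (fun y => y ∈ mS E)).card := by
      rw [Finset.card_compl, himgcard, Fintype.card_fin]
    omega
  choose Ψ hΨ1 hΨ2 using hpsi
  set Ψ' : Finset V → V → Fin n :=
    fun c => if hc : c ∈ E then Ψ c hc else fun _ => ⟨0, hn⟩ with hΨ'def
  have hΨ'1 : ∀ c, ∀ hc : c ∈ E, ∀ x ∈ c \ (c.filter (fun y => y ∈ mS E)),
      Ψ' c x ∈ ((c.filter (fun y => y ∈ mS E)).image g)ᶜ := by
    intro c hc
    rw [hΨ'def]
    simp only [dif_pos hc]
    exact hΨ1 c hc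
  have hΨ'2 : ∀ c, ∀ hc : c ∈ E, Set.InjOn (Ψ' c) ↑(c \ (c.filter (fun y => y ∈ mS E))) := by
    intro c hc
    rw [hΨ'def]
    simp only [dif_pos hc]
    exact hΨ2 c hc
  set f : V → Fin n := fun x => if x ∈ mS E then g x
    else if h : ∃ c, c ∈ E ∧ x ∈ c then Ψ' h.choose x else ⟨0, hn⟩ with hfdef
  have hfval : ∀ {x : V} {e : Finset V}, e ∈ E → x ∈ e → x ∉ mS E → f x = Ψ' e x := by
    intro x e he hx hxm
    have hex : ∃ c, c ∈ E ∧ x ∈ c := ⟨e, he, hx⟩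
    have hchoose : hex.choose = e := by
      have hspec := hex.choose_spec
      have hdeg1 : HG.deg E x ≤ 1 := by
        by_contra h2
        push_neg at h2
        exact hxm (mem_mS.mpr h2)
      by_contra hne
      have := deg_two hspec.1 he hne hspec.2 hx
      omega
    rw [hfdef]
    simp only [if_neg hxm, dif_pos hex]
    rw [hchoose]
  have hfvalS : ∀ {x : V}, x ∈ mS E → f x = g x := by
    intro x hx
    rw [hfdef]
    simp only [if_pos hx]
  have hsdiffmem : ∀ {x : V} {e : Finset V}, x ∈ e → x ∉ mS E →
      x ∈ e \ (e.filter (fun y => y ∈ mS E)) := by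
    intro x e hx hxm
    rw [Finset.mem_sdiff, Finset.mem_filter]
    exact ⟨hx, fun h => hxm h.2⟩
  refine ⟨f, ?_⟩
  intro e he u hu w hw hne
  by_cases hum : u ∈ mS E <;> by_cases hwm : w ∈ mS E
  · rw [hfvalS hum, hfvalS hwm]
    exact hgS e he u hu w hw hum hwm hne
  · rw [hfvalS hum, hfval he hw hwm]
    have hmem := hΨ'1 e he w (hsdiffmem hw hwm)
    rw [Finset.mem_compl] at hmem
    intro heq
    exact hmem (Finset.mem_image.mpr ⟨u, Finset.mem_filter.mpr ⟨hu, hum⟩, heq⟩)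
  · rw [hfval he hu hum, hfvalS hwm]
    have hmem := hΨ'1 e he u (hsdiffmem hu hum)
    rw [Finset.mem_compl] at hmem
    intro heq
    exact hmem (Finset.mem_image.mpr ⟨w, Finset.mem_filter.mpr ⟨hw, hwm⟩, heq.symm⟩)
  · rw [hfval he hu hum, hfval he hw hwm]
    intro heq
    exact hne (hΨ'2 e he (Finset.mem_coe.mpr (hsdiffmem hu hum))
      (Finset.mem_coe.mpr (hsdiffmem hw hwm)) heq)

end EFL

theorem stmt13 {V : Type*} [DecidableEq V] (n : ℕ) (hn : 0 < n)
    (E : Finset (Finset V)) (hlin : HG.Linear E)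
    (hE : E.card = n) (huniform : ∀ e ∈ E, e.card = n)
    (hswd : ∀ v ∈ HG.verts E, ¬(2 ≤ HG.deg E v ∧ (HG.deg E v : ℝ) < Real.sqrt n)) :
    IsLeast {m : ℕ | ∃ f : V → Fin m, HG.Proper E f} n := by
  constructor
  · exact EFL.exists_proper hswd hlin hE huniform hn
  · rintro m ⟨f, hf⟩
    have hEne : E.Nonempty := Finset.card_pos.mp (by omega)
    obtain ⟨e, he⟩ := hEne
    have hinj : Set.InjOn f ↑e := by
      intro u hu w hw heq
      by_contra hne
      exact hf e he u (Finset.mem_coe.mp hu) w (Finset.mem_coe.mp hw) hne heq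
    calc n = e.card := (huniform e he).symm
      _ ≤ (Finset.univ : Finset (Fin m)).card :=
          Finset.card_le_card_of_injOn f (fun _ _ => Finset.mem_univ _) hinj
      _ = m := by rw [Finset.card_univ, Fintype.card_fin]
end

section
/- Let H be a linear hypergraph with n edges, let v be a vertex with 2 ≤ d(v) < √n, let E₁,...,E_{d(v)} be the edges containing v, and for each j let i_j be the number of vertices of E_j \ {v} of degree exactly d(v), with i = i₁ + ... + i_{d(v)}. Then the number of vertices adjacent to v having degree at least d(v) (excluding v itself) is at most n − d(v) + i/d(v). -/
open scoped Classical

/-- Auxiliary: in a linear hypergraph, two distinct edges cannot share two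
distinct vertices. -/
lemma HG.linear_aux {V : Type*} {E : Finset (Finset V)} (h : HG.Linear E)
    {e f : Finset V} (he : e ∈ E) (hf : f ∈ E) (hne : e ≠ f) {u w : V}
    (hu : u ∈ e) (hu' : u ∈ f) (hw : w ∈ e) (hw' : w ∈ f) (huw : u ≠ w) : False := by
  have hle := h e he f hf hne
  have h1 : 1 < (e ∩ f).card :=
    Finset.one_lt_card.mpr ⟨u, Finset.mem_inter.mpr ⟨hu, hu'⟩,
      w, Finset.mem_inter.mpr ⟨hw, hw'⟩, huw⟩
  omega

theorem stmt14 {V : Type*} [DecidableEq V] (n : ℕ)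
    (E : Finset (Finset V)) (hlin : HG.Linear E) (hE : E.card = n)
    (v : V) (hd2 : 2 ≤ HG.deg E v) (hdlt : (HG.deg E v : ℝ) < Real.sqrt n)
    (i : ℕ)
    (hi : i = ∑ e ∈ E.filter (fun e => v ∈ e),
        ((e.erase v).filter (fun u => HG.deg E u = HG.deg E v)).card) :
    (((HG.adj E v).filter (fun u => HG.deg E v ≤ HG.deg E u)).card : ℝ) ≤
      (n : ℝ) - HG.deg E v + (i : ℝ) / (HG.deg E v : ℝ) := by
  classical
  have hdeg : ∀ u : V, HG.deg E u = (E.filter (fun f => u ∈ f)).card := by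
    intro u; unfold HG.deg; congr!
  set d := HG.deg E v with hd
  set F := E.filter (fun e => v ∈ e) with hF
  have hFsub : F ⊆ E := Finset.filter_subset _ _
  have hFcard : F.card = d := (hdeg v).symm
  have hdn : d ≤ n := by
    have := Finset.card_le_card hFsub; omega
  set A : Finset V → Finset V := fun e => (e.erase v).filter (fun u => d ≤ HG.deg E u) with hA
  -- key per-edge estimate
  have key : ∀ e ∈ F, d * (A e).card + d ≤
      ((e.erase v).filter (fun u => HG.deg E u = d)).card + n := by
    intro e he
    obtain ⟨heE, hve⟩ := Finset.mem_filter.mp he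
    set G : V → Finset (Finset V) := fun u => (E.filter (fun f => u ∈ f)).erase e with hG
    have hGcard : ∀ u ∈ A e, (G u).card = HG.deg E u - 1 := by
      intro u hu
      have hue : u ∈ e := Finset.mem_of_mem_erase (Finset.mem_filter.mp hu).1
      have hmem : e ∈ E.filter (fun f => u ∈ f) := Finset.mem_filter.mpr ⟨heE, hue⟩
      rw [hG]
      simp only []
      rw [Finset.card_erase_of_mem hmem, hdeg u]
    have hGsub : ∀ u ∈ A e, G u ⊆ E \ F := by
      intro u hu f hf
      obtain ⟨hfe, hf2⟩ := Finset.mem_erase.mp hf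
      obtain ⟨hfE, huf⟩ := Finset.mem_filter.mp hf2
      refine Finset.mem_sdiff.mpr ⟨hfE, ?_⟩
      intro hfF
      have hvf : v ∈ f := (Finset.mem_filter.mp hfF).2
      have huv : u ≠ v := (Finset.mem_erase.mp (Finset.mem_filter.mp hu).1).1
      have hue : u ∈ e := Finset.mem_of_mem_erase (Finset.mem_filter.mp hu).1
      exact HG.linear_aux hlin hfE heE hfe huf hue hvf hve huv
    have hGdisj : ∀ u₁ ∈ A e, ∀ u₂ ∈ A e, u₁ ≠ u₂ → Disjoint (G u₁) (G u₂) := by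
      intro u₁ h1 u₂ h2 hne
      rw [Finset.disjoint_left]
      intro f hf1 hf2
      obtain ⟨hfe, hf1'⟩ := Finset.mem_erase.mp hf1
      obtain ⟨hfE, hu1f⟩ := Finset.mem_filter.mp hf1'
      have hu2f : u₂ ∈ f := (Finset.mem_filter.mp (Finset.mem_erase.mp hf2).2).2
      have hu1e : u₁ ∈ e := Finset.mem_of_mem_erase (Finset.mem_filter.mp h1).1
      have hu2e : u₂ ∈ e := Finset.mem_of_mem_erase (Finset.mem_filter.mp h2).1
      exact HG.linear_aux hlin hfE heE hfe hu1f hu1e hu2f hu2e hne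
    have hsum1 : ∑ u ∈ A e, (HG.deg E u - 1) ≤ n - d := by
      calc ∑ u ∈ A e, (HG.deg E u - 1) = ∑ u ∈ A e, (G u).card :=
            Finset.sum_congr rfl (fun u hu => (hGcard u hu).symm)
        _ = ((A e).biUnion G).card := (Finset.card_biUnion hGdisj).symm
        _ ≤ (E \ F).card := by
            refine Finset.card_le_card ?_
            intro f hf
            obtain ⟨u, hu, hfu⟩ := Finset.mem_biUnion.mp hf
            exact hGsub u hu hfu
        _ = n - d := by rw [Finset.card_sdiff_of_subset hFsub, hE, hFcard]
    have hsum2 : d * (A e).card ≤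
        ((e.erase v).filter (fun u => HG.deg E u = d)).card + ∑ u ∈ A e, (HG.deg E u - 1) := by
      have hpt : ∀ u ∈ A e, d ≤ (if HG.deg E u = d then 1 else 0) + (HG.deg E u - 1) := by
        intro u hu
        have hdu : d ≤ HG.deg E u := (Finset.mem_filter.mp hu).2
        by_cases h : HG.deg E u = d
        · simp [h]; omega
        · simp [h]; omega
      have hfil : (A e).filter (fun u => HG.deg E u = d)
          = (e.erase v).filter (fun u => HG.deg E u = d) := by
        rw [hA]
        simp only []
        rw [Finset.filter_filter]
        apply Finset.filter_congr
        intro u _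
        constructor
        · intro h; exact h.2
        · intro h; exact ⟨le_of_eq h.symm, h⟩
      have hIcard : ((e.erase v).filter (fun u => HG.deg E u = d)).card =
          ∑ u ∈ A e, (if HG.deg E u = d then 1 else 0) := by
        rw [← hfil, Finset.card_filter]
      calc d * (A e).card = ∑ _u ∈ A e, d := by
            rw [Finset.sum_const, smul_eq_mul, mul_comm]
        _ ≤ ∑ u ∈ A e, ((if HG.deg E u = d then 1 else 0) + (HG.deg E u - 1)) :=
            Finset.sum_le_sum hpt
        _ = ((e.erase v).filter (fun u => HG.deg E u = d)).card + ∑ u ∈ A e, (HG.deg E u - 1) := by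
            rw [Finset.sum_add_distrib, hIcard]
    calc d * (A e).card + d
        ≤ (((e.erase v).filter (fun u => HG.deg E u = d)).card + (n - d)) + d :=
          Nat.add_le_add_right (hsum2.trans (Nat.add_le_add_left hsum1 _)) d
      _ = ((e.erase v).filter (fun u => HG.deg E u = d)).card + n := by omega
  -- the set of high-degree neighbours is the disjoint union of the A e
  have hunion : (HG.adj E v).filter (fun u => d ≤ HG.deg E u) = F.biUnion A := by
    ext u
    simp only [Finset.mem_filter, Finset.mem_biUnion, Finset.mem_erase, HG.adj, HG.verts,
      Finset.mem_sup, id, hF, hA]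
    constructor
    · rintro ⟨⟨-, huv, e, heE, hve, hue⟩, hdu⟩
      exact ⟨e, ⟨heE, hve⟩, ⟨huv, hue⟩, hdu⟩
    · rintro ⟨e, ⟨heE, hve⟩, ⟨huv, hue⟩, hdu⟩
      exact ⟨⟨⟨e, heE, hue⟩, huv, e, heE, hve, hue⟩, hdu⟩
  have hAdisj : ∀ e₁ ∈ F, ∀ e₂ ∈ F, e₁ ≠ e₂ → Disjoint (A e₁) (A e₂) := by
    intro e₁ h1 e₂ h2 hne
    rw [Finset.disjoint_left]
    intro u hu1 hu2
    have hv1 : v ∈ e₁ := (Finset.mem_filter.mp h1).2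
    have hv2 : v ∈ e₂ := (Finset.mem_filter.mp h2).2
    have huv : u ≠ v := (Finset.mem_erase.mp (Finset.mem_filter.mp hu1).1).1
    have hue1 : u ∈ e₁ := Finset.mem_of_mem_erase (Finset.mem_filter.mp hu1).1
    have hue2 : u ∈ e₂ := Finset.mem_of_mem_erase (Finset.mem_filter.mp hu2).1
    exact HG.linear_aux hlin (hFsub h1) (hFsub h2) hne hue1 hue2 hv1 hv2 huv
  -- total inequality in ℕ
  have htot : d * ((HG.adj E v).filter (fun u => d ≤ HG.deg E u)).card + d * d ≤ i + d * n := by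
    rw [hunion, Finset.card_biUnion hAdisj, Finset.mul_sum, hi]
    calc (∑ e ∈ F, d * (A e).card) + d * d
        = ∑ e ∈ F, (d * (A e).card + d) := by
          rw [Finset.sum_add_distrib, Finset.sum_const, hFcard, smul_eq_mul, mul_comm]
      _ ≤ ∑ e ∈ F, (((e.erase v).filter (fun u => HG.deg E u = d)).card + n) :=
          Finset.sum_le_sum key
      _ = (∑ e ∈ F, ((e.erase v).filter (fun u => HG.deg E u = d)).card) + d * n := by
          rw [Finset.sum_add_distrib, Finset.sum_const, hFcard, smul_eq_mul, mul_comm]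
  -- conclude over ℝ
  have hd0 : (0:ℝ) < d := by positivity
  rw [show (n:ℝ) - d + i/d = ((i:ℝ) + (d:ℝ)*n - (d:ℝ)*d)/d by field_simp; ring,
    le_div_iff₀ hd0]
  have h' : (d:ℝ) * (((HG.adj E v).filter (fun u => d ≤ HG.deg E u)).card : ℝ)
      + (d:ℝ) * d ≤ (i:ℝ) + (d:ℝ) * n := by exact_mod_cast htot
  linarith [h', mul_comm ((((HG.adj E v).filter (fun u => d ≤ HG.deg E u)).card : ℕ) : ℝ) ((d:ℕ):ℝ)]
end

section
/- Let H be a linear hypergraph with at most n edges, let v be a vertex with d = d(v) ≥ 2, let E be an edge containing v, and let i_E be the number of vertices of E \ {v} of degree exactly d. Then the number of vertices of E of degree strictly greater than d is at most ((n − d) − i_E(d − 1))/d. -/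
open scoped Classical

theorem stmt15 {V : Type*} [DecidableEq V] (n : ℕ)
    (E : Finset (Finset V)) (hlin : HG.Linear E) (hE : E.card ≤ n)
    (v : V) (d : ℕ) (hd : d = HG.deg E v) (hd2 : 2 ≤ d)
    (e : Finset V) (he : e ∈ E) (hv : v ∈ e)
    (iE : ℕ) (hiE : iE = ((e.erase v).filter (fun u => HG.deg E u = d)).card) :
    ((e.filter (fun u => d < HG.deg E u)).card : ℝ) ≤
      (((n : ℝ) - d) - (iE : ℝ) * ((d : ℝ) - 1)) / (d : ℝ) := by

  have hdeg : ∀ u : V, HG.deg E u = (E.filter (fun e' => u ∈ e')).card :=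
    fun u => congrArg Finset.card (Finset.filter_congr_decidable E (fun e' => u ∈ e') _)
  set T := E.erase e with hT
  set f : V → Finset (Finset V) := fun u => T.filter (fun e' => u ∈ e') with hf
  have hcard : ∀ u ∈ e, (f u).card + 1 = HG.deg E u := by
    intro u hu
    have h1 : f u = (E.filter (fun e' => u ∈ e')).erase e := by
      simp [hf, hT, Finset.filter_erase]
    have hme : e ∈ E.filter (fun e' => u ∈ e') := Finset.mem_filter.2 ⟨he, hu⟩
    have hpos : 1 ≤ (E.filter (fun e' => u ∈ e')).card :=
      Finset.card_pos.2 ⟨e, hme⟩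
    rw [h1, Finset.card_erase_of_mem hme, hdeg u]
    omega
  have hdisj : ∀ u ∈ e, ∀ w ∈ e, u ≠ w → Disjoint (f u) (f w) := by
    intro u hu w hw huw
    rw [Finset.disjoint_left]
    intro e' hu' hw'
    simp only [hf, Finset.mem_filter] at hu' hw'
    have he'E := (Finset.mem_erase.1 hu'.1).2
    have hne := (Finset.mem_erase.1 hu'.1).1
    have h2 : ({u, w} : Finset V) ⊆ e' ∩ e := by
      intro x hx
      rcases Finset.mem_insert.1 hx with rfl | hx
      · exact Finset.mem_inter.2 ⟨hu'.2, hu⟩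
      · rw [Finset.mem_singleton] at hx; subst hx
        exact Finset.mem_inter.2 ⟨hw'.2, hw⟩
    have h3 : 2 ≤ (e' ∩ e).card := by
      calc 2 = ({u, w} : Finset V).card := (Finset.card_pair huw).symm
        _ ≤ _ := Finset.card_le_card h2
    have h4 : (e' ∩ e).card ≤ 1 := by
      convert hlin e' he'E e he hne using 2
      ext x
      simp only [Finset.mem_inter]
    omega
  set S1 := (e.erase v).filter (fun u => HG.deg E u = d) with hS1
  set S2 := e.filter (fun u => d < HG.deg E u) with hS2
  have hS1e : S1 ⊆ e := (Finset.filter_subset _ _).trans (Finset.erase_subset _ _)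
  have hS2e : S2 ⊆ e := Finset.filter_subset _ _
  have hvS : v ∉ S1 ∪ S2 := by
    intro h
    rcases Finset.mem_union.1 h with h | h
    · exact absurd (Finset.mem_of_mem_filter v h) (Finset.notMem_erase v e)
    · have := (Finset.mem_filter.1 h).2
      omega
  have hS12 : Disjoint S1 S2 := by
    rw [Finset.disjoint_left]
    intro u h1 h2
    have := (Finset.mem_filter.1 h1).2
    have := (Finset.mem_filter.1 h2).2
    omega
  set A := insert v (S1 ∪ S2) with hA
  have hAe : A ⊆ e := by
    intro x hx
    rcases Finset.mem_insert.1 hx with rfl | hx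
    · exact hv
    · rcases Finset.mem_union.1 hx with h | h
      · exact hS1e h
      · exact hS2e h
  have hbu : (A.biUnion f).card = ∑ u ∈ A, (f u).card :=
    Finset.card_biUnion (fun x hx y hy hxy => hdisj x (hAe hx) y (hAe hy) hxy)
  have hsub : A.biUnion f ⊆ T := by
    intro x hx
    rcases Finset.mem_biUnion.1 hx with ⟨u, _, hu⟩
    exact Finset.mem_of_mem_filter x hu
  have hTcard : T.card + 1 = E.card := by
    rw [hT, Finset.card_erase_of_mem he]
    have : 1 ≤ E.card := Finset.card_pos.2 ⟨e, he⟩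
    omega
  have hsum : ∑ u ∈ A, (f u).card ≤ T.card :=
    hbu ▸ Finset.card_le_card hsub
  have hsplit : ∑ u ∈ A, (f u).card
      = (f v).card + (∑ u ∈ S1, (f u).card + ∑ u ∈ S2, (f u).card) := by
    rw [hA, Finset.sum_insert hvS, Finset.sum_union hS12]
  have hfv : (f v).card + 1 = d := by rw [hd]; exact hcard v hv
  have hsum1 : ∑ u ∈ S1, (f u).card = S1.card * (d - 1) := by
    rw [Finset.sum_congr rfl (fun u hu => ?_), Finset.sum_const, smul_eq_mul]
    have h1 := hcard u (hS1e hu)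
    have h2 := (Finset.mem_filter.1 hu).2
    omega
  have hsum2 : S2.card * d ≤ ∑ u ∈ S2, (f u).card := by
    calc S2.card * d = ∑ _u ∈ S2, d := by rw [Finset.sum_const, smul_eq_mul]
      _ ≤ _ := Finset.sum_le_sum (fun u hu => by
          have h1 := hcard u (hS2e hu)
          have h2 := (Finset.mem_filter.1 hu).2
          omega)
  have key : S2.card * d + d + S1.card * (d - 1) ≤ n := by
    have := hsum
    rw [hsplit, hsum1] at this
    omega
  have hd1 : (1:ℕ) ≤ d := by omega
  have keyR : (S2.card : ℝ) * d + d + (S1.card : ℝ) * ((d:ℝ) - 1) ≤ n := by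
    have : ((S2.card * d + d + S1.card * (d - 1) : ℕ) : ℝ) ≤ (n : ℝ) := by
      exact_mod_cast key
    push_cast [Nat.cast_sub hd1] at this
    linarith
  have hdpos : (0:ℝ) < d := by positivity
  rw [le_div_iff₀ hdpos]
  have hiE' : (iE : ℝ) = (S1.card : ℝ) := by rw [hiE, hS1]
  rw [hiE']
  linarith
end

section
/- Let H = (V, E) be a linear hypergraph with at most n edges, where n is a perfect square, and suppose every vertex has degree at least √n. If v is a vertex with d(v) = √n and |adj(v)| = n, then every vertex not in adj(v) ∪ {v} has degree exactly √n. -/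
open scoped Classical

theorem stmt16 {V : Type*} [DecidableEq V] (k : ℕ) (hk : 0 < k)
    (E : Finset (Finset V)) (hlin : HG.Linear E) (hE : E.card ≤ k ^ 2)
    (hdeg : ∀ u ∈ HG.verts E, k ≤ HG.deg E u)
    (v : V) (hdv : HG.deg E v = k) (hadj : (HG.adj E v).card = k ^ 2) :
    ∀ u ∈ HG.verts E, u ∉ HG.adj E v ∪ {v} → HG.deg E u = k := by
  intro u hu hunot
  -- clean versions of hypotheses (aligning decidability instances)
  have hlin' : ∀ e₁ ∈ E, ∀ e₂ ∈ E, e₁ ≠ e₂ → (e₁ ∩ e₂).card ≤ 1 := by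
    intro e₁ h1 e₂ h2 hne
    have h := hlin e₁ h1 e₂ h2 hne
    convert h using 2
    congr!
  have hdegeq : ∀ w : V, HG.deg E w = (E.filter (fun e => w ∈ e)).card := by
    intro w
    unfold HG.deg
    congr 1
    congr!
  set Ev : Finset (Finset V) := E.filter (fun e => v ∈ e) with hEvdef
  set En : Finset (Finset V) := E.filter (fun e => v ∉ e) with hEndef
  set adjv : Finset V := HG.adj E v with hadjvdef
  have hEvcard : Ev.card = k := by rw [← hdv, hdegeq]
  have hverts : HG.verts E = E.sup id := by
    unfold HG.verts
    congr!
  have hmemverts : ∀ e ∈ E, ∀ x ∈ e, x ∈ HG.verts E := by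
    intro e he x hx
    rw [hverts]
    exact Finset.mem_sup.mpr ⟨e, he, hx⟩
  have hadjeq : adjv = Ev.biUnion (fun e => e.erase v) := by
    ext w
    simp only [hadjvdef, HG.adj, Finset.mem_filter, Finset.mem_biUnion, hEvdef,
      Finset.mem_erase]
    constructor
    · rintro ⟨-, hne, e, he, hve, hwe⟩
      exact ⟨e, ⟨he, hve⟩, hne, hwe⟩
    · rintro ⟨e, ⟨he, hve⟩, hne, hwe⟩
      exact ⟨hmemverts e he w hwe, hne, e, he, hve, hwe⟩
  have hdisj : ∀ e₁ ∈ Ev, ∀ e₂ ∈ Ev, e₁ ≠ e₂ → Disjoint (e₁.erase v) (e₂.erase v) := by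
    intro e₁ h1 e₂ h2 hne
    rw [Finset.disjoint_left]
    intro x hx1 hx2
    rw [Finset.mem_erase] at hx1 hx2
    have h1' := Finset.mem_filter.mp h1
    have h2' := Finset.mem_filter.mp h2
    have hle := hlin' e₁ h1'.1 e₂ h2'.1 hne
    have hsub : ({x, v} : Finset V) ⊆ e₁ ∩ e₂ := by
      intro y hy
      rcases Finset.mem_insert.mp hy with rfl | hy
      · exact Finset.mem_inter.mpr ⟨hx1.2, hx2.2⟩
      · rw [Finset.mem_singleton] at hy; subst hy
        exact Finset.mem_inter.mpr ⟨h1'.2, h2'.2⟩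
    have : ({x, v} : Finset V).card ≤ 1 := le_trans (Finset.card_le_card hsub) hle
    rw [Finset.card_insert_of_notMem (by simp [hx1.1]), Finset.card_singleton] at this
    omega
  have hsumerase : ∑ e ∈ Ev, (e.erase v).card = k ^ 2 := by
    rw [← Finset.card_biUnion hdisj, ← hadjeq]
    exact hadj
  have huniq : ∀ w ∈ adjv, (Ev.filter (fun e => w ∈ e)).card = 1 := by
    intro w hw
    simp only [hadjvdef, HG.adj, Finset.mem_filter] at hw
    obtain ⟨-, hwv, e, he, hve, hwe⟩ := hw
    apply le_antisymm
    · rw [Finset.card_le_one]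
      intro e₁ h1 e₂ h2
      simp only [Finset.mem_filter, hEvdef] at h1 h2
      by_contra hne
      have hle := hlin' e₁ h1.1.1 e₂ h2.1.1 hne
      have hsub : ({w, v} : Finset V) ⊆ e₁ ∩ e₂ := by
        intro y hy
        rcases Finset.mem_insert.mp hy with rfl | hy
        · exact Finset.mem_inter.mpr ⟨h1.2, h2.2⟩
        · rw [Finset.mem_singleton] at hy; subst hy
          exact Finset.mem_inter.mpr ⟨h1.1.2, h2.1.2⟩
      have : ({w, v} : Finset V).card ≤ 1 := le_trans (Finset.card_le_card hsub) hle
      rw [Finset.card_insert_of_notMem (by simp [hwv]), Finset.card_singleton] at this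
      omega
    · rw [Nat.one_le_iff_ne_zero, ← Nat.pos_iff_ne_zero, Finset.card_pos]
      exact ⟨e, Finset.mem_filter.mpr ⟨Finset.mem_filter.mpr ⟨he, hve⟩, hwe⟩⟩
  have hsplit : ∀ w : V,
      (Ev.filter (fun e => w ∈ e)).card + (En.filter (fun e => w ∈ e)).card = HG.deg E w := by
    intro w
    rw [hdegeq w, hEvdef, hEndef]
    have h1 : (E.filter (fun e => v ∈ e)).filter (fun e => w ∈ e)
        = (E.filter (fun e => w ∈ e)).filter (fun e => v ∈ e) := by
      ext e; simp only [Finset.mem_filter]; tauto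
    have h2 : (E.filter (fun e => v ∉ e)).filter (fun e => w ∈ e)
        = (E.filter (fun e => w ∈ e)).filter (fun e => ¬ v ∈ e) := by
      ext e; simp only [Finset.mem_filter]; tauto
    rw [h1, h2]
    exact Finset.card_filter_add_card_filter_not _
  have hdc : ∑ f ∈ En, (adjv.filter (fun w => w ∈ f)).card
      = ∑ w ∈ adjv, (En.filter (fun f => w ∈ f)).card := by
    simp_rw [Finset.card_filter]
    rw [Finset.sum_comm]
  have hlow : ∀ w ∈ adjv, k ≤ (En.filter (fun f => w ∈ f)).card + 1 := by
    intro w hw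
    have h1 := huniq w hw
    have h2 := hsplit w
    have hwverts : w ∈ HG.verts E := by
      rw [hadjeq, Finset.mem_biUnion] at hw
      obtain ⟨e, he, hwe⟩ := hw
      exact hmemverts e (Finset.mem_filter.mp he).1 w (Finset.mem_of_mem_erase hwe)
    have h3 := hdeg w hwverts
    omega
  have hIlow : k ^ 2 * k ≤ (∑ f ∈ En, (adjv.filter (fun w => w ∈ f)).card) + k ^ 2 := by
    rw [hdc]
    calc k ^ 2 * k = ∑ _w ∈ adjv, k := by rw [Finset.sum_const, hadj, smul_eq_mul]
    _ ≤ ∑ w ∈ adjv, ((En.filter (fun f => w ∈ f)).card + 1) := Finset.sum_le_sum hlow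
    _ = (∑ w ∈ adjv, (En.filter (fun f => w ∈ f)).card) + k ^ 2 := by
        rw [Finset.sum_add_distrib, Finset.sum_const, hadj, smul_eq_mul, mul_one]
  have hfilt : ∀ f, adjv.filter (fun w => w ∈ f) = Ev.biUnion (fun e => (e.erase v) ∩ f) := by
    intro f
    ext w
    rw [Finset.mem_filter, hadjeq]
    simp only [Finset.mem_biUnion, Finset.mem_inter]
    tauto
  have hub : ∀ f ∈ En, (adjv.filter (fun w => w ∈ f)).card ≤ k := by
    intro f hf
    have hf' := Finset.mem_filter.mp hf
    rw [hfilt f]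
    calc (Ev.biUnion (fun e => (e.erase v) ∩ f)).card
        ≤ ∑ e ∈ Ev, ((e.erase v) ∩ f).card := Finset.card_biUnion_le
    _ ≤ ∑ _e ∈ Ev, 1 := by
        apply Finset.sum_le_sum
        intro e he
        have he' := Finset.mem_filter.mp he
        have hne : e ≠ f := by
          rintro rfl; exact hf'.2 he'.2
        calc ((e.erase v) ∩ f).card ≤ (e ∩ f).card :=
              Finset.card_le_card (Finset.inter_subset_inter (Finset.erase_subset v e) le_rfl)
        _ ≤ 1 := hlin' e he'.1 f hf'.1 hne
    _ ≤ k := by rw [Finset.sum_const, hEvcard, smul_eq_mul, mul_one]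
  have hEncard : En.card + k ≤ k ^ 2 := by
    have : Ev.card + En.card = E.card := by
      rw [hEvdef, hEndef]
      exact Finset.card_filter_add_card_filter_not _
    omega
  have hexact : ∀ f ∈ En, (adjv.filter (fun w => w ∈ f)).card = k := by
    by_contra hcon
    push_neg at hcon
    obtain ⟨f, hf, hfk⟩ := hcon
    have hstrict : (∑ f ∈ En, (adjv.filter (fun w => w ∈ f)).card) < En.card * k := by
      calc (∑ f ∈ En, (adjv.filter (fun w => w ∈ f)).card) < ∑ _f ∈ En, k := by
            apply Finset.sum_lt_sum (fun g hg => hub g hg)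
            exact ⟨f, hf, lt_of_le_of_ne (hub f hf) hfk⟩
      _ = En.card * k := by rw [Finset.sum_const, smul_eq_mul]
    have h1 : En.card * k + k * k ≤ k ^ 2 * k := by
      calc En.card * k + k * k = (En.card + k) * k := by ring
      _ ≤ k ^ 2 * k := Nat.mul_le_mul_right k hEncard
    have h2 : k * k = k ^ 2 := by ring
    omega
  have hmeet : ∀ f ∈ En, ∀ e ∈ Ev, ((e.erase v) ∩ f).Nonempty := by
    intro f hf e he
    by_contra hempty
    rw [Finset.not_nonempty_iff_eq_empty] at hempty
    have hf' := Finset.mem_filter.mp hf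
    have hsum : ∑ e' ∈ Ev, ((e'.erase v) ∩ f).card < k := by
      have hle1 : ∀ e' ∈ Ev, ((e'.erase v) ∩ f).card ≤ 1 := by
        intro e' he'
        have he'' := Finset.mem_filter.mp he'
        have hne : e' ≠ f := by rintro rfl; exact hf'.2 he''.2
        calc ((e'.erase v) ∩ f).card ≤ (e' ∩ f).card :=
              Finset.card_le_card (Finset.inter_subset_inter (Finset.erase_subset v e') le_rfl)
        _ ≤ 1 := hlin' e' he''.1 f hf'.1 hne
      calc ∑ e' ∈ Ev, ((e'.erase v) ∩ f).card
          = ∑ e' ∈ Ev.erase e, ((e'.erase v) ∩ f).card := by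
            rw [← Finset.sum_erase_add Ev _ he, hempty]
            simp
      _ ≤ ∑ _e' ∈ Ev.erase e, 1 :=
            Finset.sum_le_sum (fun e' he' => hle1 e' (Finset.mem_of_mem_erase he'))
      _ = (Ev.erase e).card := by simp
      _ < k := by
            rw [Finset.card_erase_of_mem he, hEvcard]
            omega
    have hx := hexact f hf
    rw [hfilt f] at hx
    have hle := Finset.card_biUnion_le (s := Ev) (t := fun e' => (e'.erase v) ∩ f)
    omega
  obtain ⟨e₀, he₀, he₀card⟩ : ∃ e₀ ∈ Ev, (e₀.erase v).card ≤ k := by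
    by_contra hcon
    push_neg at hcon
    have : Ev.card * (k + 1) ≤ ∑ e ∈ Ev, (e.erase v).card :=
      Finset.card_nsmul_le_sum Ev _ (k + 1) (fun e he => hcon e he)
    rw [hEvcard, hsumerase] at this
    nlinarith
  have huv : u ≠ v := by
    intro h; apply hunot; rw [Finset.mem_union]; right; simp [h]
  have hunadj : u ∉ adjv := by
    intro h; apply hunot; rw [Finset.mem_union]; left; exact h
  have hEu : E.filter (fun e => u ∈ e) ⊆ En := by
    intro f hf
    have hf' := Finset.mem_filter.mp hf
    rw [hEndef, Finset.mem_filter]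
    refine ⟨hf'.1, fun hvf => ?_⟩
    apply hunadj
    rw [hadjeq, Finset.mem_biUnion]
    exact ⟨f, Finset.mem_filter.mpr ⟨hf'.1, hvf⟩, Finset.mem_erase.mpr ⟨huv, hf'.2⟩⟩
  have hinj : (E.filter (fun e => u ∈ e)).card ≤ (e₀.erase v).card := by
    apply Finset.card_le_card_of_injOn
      (fun f => if h : ((e₀.erase v) ∩ f).Nonempty then h.choose else v)
    · intro f hf
      have hne := hmeet f (hEu hf) e₀ he₀
      simp only [dif_pos hne]
      exact (Finset.mem_inter.mp hne.choose_spec).1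
    · intro f hf g hg hfg
      simp only [Finset.mem_coe] at hf hg
      have hnef := hmeet f (hEu hf) e₀ he₀
      have hneg := hmeet g (hEu hg) e₀ he₀
      simp only [dif_pos hnef, dif_pos hneg] at hfg
      set w := hnef.choose with hw
      have hwf : w ∈ (e₀.erase v) ∩ f := hnef.choose_spec
      have hwg : w ∈ (e₀.erase v) ∩ g := hfg ▸ hneg.choose_spec
      by_contra hne
      have hf' := Finset.mem_filter.mp hf
      have hg' := Finset.mem_filter.mp hg
      have hle := hlin' f hf'.1 g hg'.1 hne
      have hwadj : w ∈ adjv := by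
        rw [hadjeq, Finset.mem_biUnion]
        exact ⟨e₀, he₀, (Finset.mem_inter.mp hwf).1⟩
      have hwu : w ≠ u := by rintro rfl; exact hunadj hwadj
      have hsub : ({w, u} : Finset V) ⊆ f ∩ g := by
        intro y hy
        rcases Finset.mem_insert.mp hy with rfl | hy
        · exact Finset.mem_inter.mpr ⟨(Finset.mem_inter.mp hwf).2, (Finset.mem_inter.mp hwg).2⟩
        · rw [Finset.mem_singleton] at hy; subst hy
          exact Finset.mem_inter.mpr ⟨hf'.2, hg'.2⟩
      have : ({w, u} : Finset V).card ≤ 1 := le_trans (Finset.card_le_card hsub) hle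
      rw [Finset.card_insert_of_notMem (by simp [hwu]), Finset.card_singleton] at this
      omega
  have hfin : HG.deg E u ≤ k := by
    rw [hdegeq]
    exact le_trans hinj he₀card
  exact le_antisymm hfin (hdeg u hu)
end

section
/- Suppose a hypergraph H = (V, E) with n edges, n a perfect square, satisfies: every edge has exactly √n + 1 vertices, every vertex has degree √n, any two distinct edges intersect in exactly one vertex, and for every edge E and vertex u ∉ E there is exactly one vertex of E not adjacent to u. Fix an edge E = {v₀, ..., v_{√n}} and set E_i = {u ∈ V : u not adjacent to v_i} ∪ {v_i}. Then V is the disjoint union of E₀, ..., E_{√n}. -/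
open scoped Classical

lemma adj_mem_verts {V : Type*} {E : Finset (Finset V)} {e : Finset V}
    (he : e ∈ E) {w : V} (hw : w ∈ e) : w ∈ HG.verts E :=
  Finset.le_sup (f := id) he hw

lemma adj_symm {V : Type*} {E : Finset (Finset V)} {u w : V}
    (hu : u ∈ HG.verts E) (h : w ∈ HG.adj E u) : u ∈ HG.adj E w := by
  simp only [HG.adj, Finset.mem_filter] at h ⊢
  obtain ⟨_, hne, e', he', hue', hwe'⟩ := h
  exact ⟨hu, hne.symm, e', he', hwe', hue'⟩

theorem stmt17 {V : Type*} [DecidableEq V] (k : ℕ) (hk : 0 < k)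
    (E : Finset (Finset V)) (hE : E.card = k ^ 2)
    (hsize : ∀ e ∈ E, e.card = k + 1)
    (hdeg : ∀ u ∈ HG.verts E, HG.deg E u = k)
    (hmeet : ∀ e₁ ∈ E, ∀ e₂ ∈ E, e₁ ≠ e₂ → (e₁ ∩ e₂).card = 1)
    (hnonadj : ∀ e ∈ E, ∀ u ∈ HG.verts E, u ∉ e →
      (e.filter (fun w => w ∉ HG.adj E u)).card = 1)
    (e : Finset V) (he : e ∈ E) :
    ∀ u ∈ HG.verts E, ∃! w, w ∈ e ∧
      u ∈ ((HG.verts E).filter (fun x => x ∉ HG.adj E w)) ∪ {w} := by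
  intro u hu
  by_cases hue : u ∈ e
  · refine ⟨u, ⟨hue, Finset.mem_union_right _ (Finset.mem_singleton_self u)⟩, ?_⟩
    rintro w ⟨hwe, hmem⟩
    rcases Finset.mem_union.mp hmem with h | h
    · simp only [HG.adj, Finset.mem_filter] at h
      by_contra hne
      exact h.2 ⟨hu, fun hh => hne hh.symm, e, he, hwe, hue⟩
    · exact (Finset.mem_singleton.mp h).symm
  · have h1 := hnonadj e he u hu hue
    obtain ⟨a, ha⟩ := Finset.card_eq_one.mp h1
    have haf : a ∈ e.filter (fun w => w ∉ HG.adj E u) := ha ▸ Finset.mem_singleton_self a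
    simp only [Finset.mem_filter] at haf
    refine ⟨a, ⟨haf.1, Finset.mem_union_left _ ?_⟩, ?_⟩
    · simp only [Finset.mem_filter]
      exact ⟨hu, fun hadj => haf.2 (adj_symm (adj_mem_verts he haf.1) hadj)⟩
    · rintro w ⟨hwe, hmem⟩
      have hne : u ≠ w := fun h => hue (h ▸ hwe)
      have hnadj : u ∉ HG.adj E w := by
        rcases Finset.mem_union.mp hmem with h | h
        · exact (Finset.mem_filter.mp h).2
        · exact absurd (Finset.mem_singleton.mp h) hne
      have : w ∈ e.filter (fun w => w ∉ HG.adj E u) := by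
        simp only [Finset.mem_filter]
        exact ⟨hwe, fun hadj => hnadj (adj_symm hu hadj)⟩
      rw [ha, Finset.mem_singleton] at this
      exact this
end

section
/- Let H be a linear hypergraph with n edges in which every edge has exactly √n + 1 vertices (n a perfect square), every vertex has degree √n, any two edges meet in exactly one vertex, and for every edge E and vertex u ∉ E exactly one vertex of E is non-adjacent to u. Then χ(H) = √n + 1. -/
open scoped Classical

lemma HG.mem_verts {V : Type*} {E : Finset (Finset V)} {e : Finset V} {v : V}
    (he : e ∈ E) (hv : v ∈ e) : v ∈ HG.verts E :=
  Finset.mem_sup.mpr ⟨e, he, hv⟩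

lemma HG.adj_symm_not {V : Type*} (E : Finset (Finset V))
    {u x : V} (hu : u ∈ HG.verts E) (hne : u ≠ x) (h : x ∉ HG.adj E u) :
    u ∉ HG.adj E x := by
  intro hux
  simp only [HG.adj, Finset.mem_filter] at hux h
  push_neg at h
  obtain ⟨_, _, e, he, hxe, hue⟩ := hux
  have hxv : x ∈ HG.verts E := HG.mem_verts he hxe
  exact (h hxv (Ne.symm hne) e he hue) hxe

theorem stmt18 {V : Type*} [DecidableEq V] (k : ℕ) (hk : 0 < k)
    (E : Finset (Finset V)) (hlin : HG.Linear E) (hE : E.card = k ^ 2)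
    (hsize : ∀ e ∈ E, e.card = k + 1)
    (hdeg : ∀ u ∈ HG.verts E, HG.deg E u = k)
    (hmeet : ∀ e₁ ∈ E, ∀ e₂ ∈ E, e₁ ≠ e₂ → (e₁ ∩ e₂).card = 1)
    (hnonadj : ∀ e ∈ E, ∀ u ∈ HG.verts E, u ∉ e →
      (e.filter (fun w => w ∉ HG.adj E u)).card = 1) :
    IsLeast {m : ℕ | ∃ f : V → Fin m, HG.Proper E f} (k + 1) := by
  have hEne : E.Nonempty := by
    rw [← Finset.card_pos, hE]; positivity
  obtain ⟨e₀, he₀⟩ := hEne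
  have hcard₀ : e₀.card = k + 1 := hsize e₀ he₀
  constructor
  · -- ∃ proper (k+1)-coloring
    have key : ∀ u ∈ HG.verts E, (e₀.filter (fun w => w ∉ HG.adj E u)).card = 1 := by
      intro u hu
      by_cases hue : u ∈ e₀
      · have heq : e₀.filter (fun w => w ∉ HG.adj E u) = {u} := by
          ext w
          simp only [Finset.mem_filter, Finset.mem_singleton]
          constructor
          · rintro ⟨hw, hnot⟩
            by_contra hne
            refine hnot ?_
            simp only [HG.adj, Finset.mem_filter]
            exact ⟨HG.mem_verts he₀ hw, hne, e₀, he₀, hue, hw⟩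
          · rintro rfl
            refine ⟨hue, fun h => ?_⟩
            simp only [HG.adj, Finset.mem_filter] at h
            exact h.2.1 rfl
        rw [heq, Finset.card_singleton]
      · exact hnonadj e₀ he₀ u hu hue
    have hex : ∀ u, u ∈ HG.verts E → ∃ w ∈ e₀, w ∉ HG.adj E u := by
      intro u hu
      have := key u hu
      have hne : (e₀.filter (fun w => w ∉ HG.adj E u)).Nonempty := by
        rw [← Finset.card_pos, this]; norm_num
      obtain ⟨w, hw⟩ := hne
      exact ⟨w, (Finset.mem_filter.mp hw).1, (Finset.mem_filter.mp hw).2⟩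
    classical
    set f : V → Fin (k + 1) := fun u =>
      if h : ∃ w ∈ e₀, w ∉ HG.adj E u then
        Fin.cast hcard₀ (e₀.equivFin ⟨h.choose, h.choose_spec.1⟩)
      else 0 with hf
    refine ⟨f, ?_⟩
    intro e he u hue w hwe huw hfuw
    have hu : u ∈ HG.verts E := HG.mem_verts he hue
    have hw : w ∈ HG.verts E := HG.mem_verts he hwe
    have hu' := hex u hu
    have hw' := hex w hw
    rw [hf] at hfuw
    simp only [dif_pos hu', dif_pos hw'] at hfuw
    have hxeq : hu'.choose = hw'.choose := by
      have := Fin.cast_injective hcard₀ hfuw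
      have := e₀.equivFin.injective this
      exact Subtype.ext_iff.mp this
    set x := hu'.choose with hxdef
    have hxe₀ : x ∈ e₀ := hu'.choose_spec.1
    have hxu : x ∉ HG.adj E u := hu'.choose_spec.2
    have hxw : x ∉ HG.adj E w := hxeq ▸ hw'.choose_spec.2
    by_cases hxe : x ∈ e
    · -- x in e: x must equal both u and w
      have h1 : x = u := by
        by_contra hne
        refine hxu ?_
        simp only [HG.adj, Finset.mem_filter]
        exact ⟨HG.mem_verts he₀ hxe₀, hne, e, he, hue, hxe⟩
      have h2 : x = w := by
        by_contra hne
        refine hxw ?_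
        simp only [HG.adj, Finset.mem_filter]
        exact ⟨HG.mem_verts he₀ hxe₀, hne, e, he, hwe, hxe⟩
      exact huw (h1 ▸ h2)
    · -- x not in e: u and w both in the unique non-adjacent filter
      have hxv : x ∈ HG.verts E := HG.mem_verts he₀ hxe₀
      have hcard1 := hnonadj e he x hxv hxe
      have hune : u ≠ x := fun h => hxe (h ▸ hue)
      have hwne : w ≠ x := fun h => hxe (h ▸ hwe)
      have hu2 : u ∈ e.filter (fun y => y ∉ HG.adj E x) := by
        simp only [Finset.mem_filter]
        exact ⟨hue, HG.adj_symm_not E hu hune hxu⟩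
      have hw2 : w ∈ e.filter (fun y => y ∉ HG.adj E x) := by
        simp only [Finset.mem_filter]
        exact ⟨hwe, HG.adj_symm_not E hw hwne hxw⟩
      obtain ⟨z, hz⟩ := Finset.card_eq_one.mp hcard1
      rw [hz, Finset.mem_singleton] at hu2 hw2
      exact huw (hu2.trans hw2.symm)
  · -- lower bound
    intro m hm
    obtain ⟨f, hf⟩ := hm
    have hinj : Set.InjOn f e₀ := by
      intro a ha b hb hab
      by_contra hne
      exact hf e₀ he₀ a ha b hb hne hab
    have := Finset.card_le_card_of_injOn f
      (fun a _ => Finset.mem_univ (f a)) hinj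
    simpa [hcard₀] using this
end
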